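/- arXiv:1808.00772 — 10 statements merged into one kernel-verified Lean document; each statement's English description precedes it below -/
import Mathlib

section
/- Let X be a real Banach space with dim X ≥ 2 and let F = ‖·‖ be the norm function on X. For each x ∈ S_X let p_x ∈ X* be a subgradient of F at x. Then for all τ ≥ 0: ρ_X(τ) ≤ sup_{x ∈ S_X} ρ_{F,x}^{p_x}(τ) ≤ 2ρ_X(τ). -/
open scoped ENNReal

/-- The modulus of smoothness of a normed space `Y`:
`ρ_Y(τ) = sup {(‖x+τy‖+‖x−τy‖)/2 − 1 : x, y ∈ S_Y}`. -/
noncomputable def rhoSpace (Y : Type*) [NormedAddCommGroup Y] [NormedSpace ℝ Y] (τ : ℝ) : ℝ :=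
  sSup {r : ℝ | ∃ x y : Y, ‖x‖ = 1 ∧ ‖y‖ = 1 ∧ r = (‖x + τ • y‖ + ‖x - τ • y‖) / 2 - 1}

/-- The modulus of convexity of a normed space `Y`:
`δ_Y(ε) = inf {1 − ‖y+ỹ‖/2 : y, ỹ ∈ S_Y, ‖y−ỹ‖ = ε}`. -/
noncomputable def deltaSpace (Y : Type*) [NormedAddCommGroup Y] [NormedSpace ℝ Y] (ε : ℝ) : ℝ :=
  sInf {r : ℝ | ∃ y z : Y, ‖y‖ = 1 ∧ ‖z‖ = 1 ∧ ‖y - z‖ = ε ∧ r = 1 - ‖y + z‖ / 2}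

/-- `φ` is a subgradient of `F` at `x`: `F(y) ≥ F(x) + ⟨φ, y−x⟩` for all `y`. -/
def IsSubgradient {X : Type*} [NormedAddCommGroup X] [NormedSpace ℝ X]
    (F : X → ℝ) (x : X) (φ : X →L[ℝ] ℝ) : Prop :=
  ∀ y : X, F x + φ (y - x) ≤ F y

/-- The linearization error (Bregman divergence)
`Δ_F^{φ}(y,x) = F(y) − F(x) − ⟨φ, y−x⟩`. -/
def breg {X : Type*} [NormedAddCommGroup X] [NormedSpace ℝ X]
    (F : X → ℝ) (φ : X →L[ℝ] ℝ) (y x : X) : ℝ :=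
  F y - F x - φ (y - x)

/-- The modulus of smoothness of `F` at `x` w.r.t. `φ`, with values in `[0,∞]`:
`ρ_{F,x}^{φ}(τ) = sup {|Δ_F^{φ}(y,x)| : ‖y−x‖ = τ}`. -/
noncomputable def rhoF {X : Type*} [NormedAddCommGroup X] [NormedSpace ℝ X]
    (F : X → ℝ) (x : X) (φ : X →L[ℝ] ℝ) (τ : ℝ) : ℝ≥0∞ :=
  ⨆ y ∈ {y : X | ‖y - x‖ = τ}, ENNReal.ofReal |breg F φ y x|

/-- The modulus of convexity of `F` at `x` w.r.t. `φ`, with values in `[0,∞]`: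
`δ_{F,x}^{φ}(τ) = inf {|Δ_F^{φ}(y,x)| : ‖y−x‖ = τ}`. -/
noncomputable def deltaF {X : Type*} [NormedAddCommGroup X] [NormedSpace ℝ X]
    (F : X → ℝ) (x : X) (φ : X →L[ℝ] ℝ) (τ : ℝ) : ℝ≥0∞ :=
  ⨅ y ∈ {y : X | ‖y - x‖ = τ}, ENNReal.ofReal |breg F φ y x|

/-- `jp` is a selection of the duality mapping with exponent `p`:
`⟨j_p(x), x⟩ = ‖j_p(x)‖·‖x‖` and `‖j_p(x)‖ = ‖x‖^{p−1}` for every `x`. -/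
def IsDualitySelection {X : Type*} [NormedAddCommGroup X] [NormedSpace ℝ X]
    (p : ℝ) (jp : X → X →L[ℝ] ℝ) : Prop :=
  ∀ x : X, jp x x = ‖jp x‖ * ‖x‖ ∧ ‖jp x‖ = ‖x‖ ^ (p - 1)

/-- for `F = ‖·‖` and subgradients `p_x ∈ ∂F(x)` for `x ∈ S_X`,
`ρ_X(τ) ≤ sup_{x ∈ S_X} ρ_{F,x}^{p_x}(τ) ≤ 2ρ_X(τ)` for all `τ ≥ 0`. -/
theorem stmt4 (X : Type*) [NormedAddCommGroup X] [NormedSpace ℝ X] [CompleteSpace X]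
    (hdim : 2 ≤ Module.rank ℝ X)
    (p : X → X →L[ℝ] ℝ)
    (hp : ∀ x : X, ‖x‖ = 1 → IsSubgradient (fun z : X => ‖z‖) x (p x)) :
    ∀ τ : ℝ, 0 ≤ τ →
      ENNReal.ofReal (rhoSpace X τ) ≤
          (⨆ x ∈ {x : X | ‖x‖ = 1}, rhoF (fun z : X => ‖z‖) x (p x) τ) ∧
      (⨆ x ∈ {x : X | ‖x‖ = 1}, rhoF (fun z : X => ‖z‖) x (p x) τ) ≤
          ENNReal.ofReal (2 * rhoSpace X τ) := by
  intro τ hτ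
  have hnt : Nontrivial X := by
    rw [← rank_pos_iff_nontrivial (R := ℝ)]
    exact lt_of_lt_of_le (by norm_num) hdim
  obtain ⟨v, hv0⟩ := exists_ne (0 : X)
  have hve : ‖(‖v‖⁻¹ • v : X)‖ = 1 := by
    rw [norm_smul, norm_inv, norm_norm, inv_mul_cancel₀ (norm_ne_zero_iff.mpr hv0)]
  set e : X := ‖v‖⁻¹ • v with he
  set S := {r : ℝ | ∃ x y : X, ‖x‖ = 1 ∧ ‖y‖ = 1 ∧
      r = (‖x + τ • y‖ + ‖x - τ • y‖) / 2 - 1} with hS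
  have hSne : S.Nonempty := ⟨_, e, e, hve, hve, rfl⟩
  have hSbdd : BddAbove S := by
    refine ⟨τ, ?_⟩
    rintro r ⟨x, y, hx, hy, rfl⟩
    have h1 : ‖x + τ • y‖ ≤ 1 + τ := by
      calc ‖x + τ • y‖ ≤ ‖x‖ + ‖τ • y‖ := norm_add_le _ _
      _ = 1 + τ := by rw [hx, norm_smul, hy, Real.norm_eq_abs, abs_of_nonneg hτ, mul_one]
    have h2 : ‖x - τ • y‖ ≤ 1 + τ := by
      calc ‖x - τ • y‖ ≤ ‖x‖ + ‖τ • y‖ := norm_sub_le _ _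
      _ = 1 + τ := by rw [hx, norm_smul, hy, Real.norm_eq_abs, abs_of_nonneg hτ, mul_one]
    linarith
  have hrhoS : rhoSpace X τ = sSup S := rfl
  have hmem : ∀ x y : X, ‖x‖ = 1 → ‖y‖ = 1 →
      (‖x + τ • y‖ + ‖x - τ • y‖) / 2 - 1 ≤ rhoSpace X τ :=
    fun x y hx hy => le_csSup hSbdd ⟨x, y, hx, hy, rfl⟩
  have hnn : ∀ x y : X, ‖x‖ = 1 → 0 ≤ (‖x + τ • y‖ + ‖x - τ • y‖) / 2 - 1 := by
    intro x y hx
    have h1 : ‖(x + τ • y) + (x - τ • y)‖ ≤ ‖x + τ • y‖ + ‖x - τ • y‖ := norm_add_le _ _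
    have h2 : (x + τ • y) + (x - τ • y) = (2 : ℝ) • x := by
      rw [two_smul]; abel
    rw [h2, norm_smul] at h1
    simp only [hx, Real.norm_ofNat, mul_one] at h1
    linarith
  have hρ0 : 0 ≤ rhoSpace X τ := le_trans (hnn e e hve) (hmem e e hve hve)
  -- basic subgradient facts
  have hb1 : ∀ x y : X, ‖x‖ = 1 → 0 ≤ breg (fun z : X => ‖z‖) (p x) y x := by
    intro x y hx
    have := hp x hx y
    simp only [breg]
    simp only at this
    linarith
  have hb2 : ∀ x y : X, ‖x‖ = 1 →
      breg (fun z : X => ‖z‖) (p x) y x ≤ ‖y‖ + ‖x - (y - x)‖ - 2 := by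
    intro x y hx
    have h := hp x hx (x - (y - x))
    simp only at h
    have he1 : (x - (y - x)) - x = -(y - x) := by abel
    rw [he1, map_neg, hx] at h
    simp only [breg, hx]
    linarith
  -- breg ≤ 2 ρ
  have hb3 : ∀ x y : X, ‖x‖ = 1 → ‖y - x‖ = τ →
      breg (fun z : X => ‖z‖) (p x) y x ≤ 2 * rhoSpace X τ := by
    intro x y hx hyx
    rcases eq_or_lt_of_le hτ with h0 | h0
    · have : y - x = 0 := by rw [← norm_eq_zero, hyx, ← h0]
      have hyx' : y = x := by rw [sub_eq_zero] at this; exact this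
      simp only [breg, hyx', hx, sub_self, map_zero]
      linarith
    · set u : X := τ⁻¹ • (y - x) with hu
      have hune : ‖u‖ = 1 := by
        rw [hu, norm_smul, hyx, norm_inv, Real.norm_eq_abs, abs_of_pos h0,
          inv_mul_cancel₀ h0.ne']
      have h1 : x + τ • u = y := by
        rw [hu, smul_smul, mul_inv_cancel₀ h0.ne', one_smul]; abel
      have h2 : x - τ • u = x - (y - x) := by
        rw [hu, smul_smul, mul_inv_cancel₀ h0.ne', one_smul]
      have hr := hmem x u hx hune
      rw [h1, h2] at hr
      have := hb2 x y hx
      linarith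
  refine ⟨?_, ?_⟩
  · -- lower bound
    set Sup := ⨆ x ∈ {x : X | ‖x‖ = 1}, rhoF (fun z : X => ‖z‖) x (p x) τ with hSup
    rcases eq_top_or_lt_top Sup with htop | htop
    · rw [htop]; exact le_top
    have hne : Sup ≠ ⊤ := htop.ne
    rw [ENNReal.ofReal_le_iff_le_toReal hne, hrhoS]
    apply csSup_le hSne
    rintro r ⟨x, u, hx, hu, rfl⟩
    have hyp2 : ‖(x + τ • u) - x‖ = τ := by
      have : (x + τ • u) - x = τ • u := by abel
      rw [this, norm_smul, hu, Real.norm_eq_abs, abs_of_nonneg hτ, mul_one]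
    have hym2 : ‖(x - τ • u) - x‖ = τ := by
      have : (x - τ • u) - x = -(τ • u) := by abel
      rw [this, norm_neg, norm_smul, hu, Real.norm_eq_abs, abs_of_nonneg hτ, mul_one]
    have hle : ∀ y : X, ‖y - x‖ = τ →
        |breg (fun z : X => ‖z‖) (p x) y x| ≤ Sup.toReal := by
      intro y hy
      have l1 : ENNReal.ofReal |breg (fun z : X => ‖z‖) (p x) y x| ≤
          rhoF (fun z : X => ‖z‖) x (p x) τ :=
        le_biSup (fun y => ENNReal.ofReal |breg (fun z : X => ‖z‖) (p x) y x|) hy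
      have l2 : rhoF (fun z : X => ‖z‖) x (p x) τ ≤ Sup :=
        le_biSup (fun x => rhoF (fun z : X => ‖z‖) x (p x) τ) hx
      exact (ENNReal.ofReal_le_iff_le_toReal hne).mp (le_trans l1 l2)
    have tp2 := abs_le.mp (hle _ hyp2)
    have tm2 := abs_le.mp (hle _ hym2)
    have e1 : (x + τ • u) - x = τ • u := by abel
    have e2 : (x - τ • u) - x = -(τ • u) := by abel
    have hsum : breg (fun z : X => ‖z‖) (p x) (x + τ • u) x +
        breg (fun z : X => ‖z‖) (p x) (x - τ • u) x
        = ‖x + τ • u‖ + ‖x - τ • u‖ - 2 := by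
      simp only [breg, e1, e2, map_neg, hx]
      ring
    linarith [tp2.2, tm2.2]
  · -- upper bound
    apply iSup₂_le
    intro x hx
    apply iSup₂_le
    intro y hy
    have hx' : ‖x‖ = 1 := hx
    have hy' : ‖y - x‖ = τ := hy
    apply ENNReal.ofReal_le_ofReal
    rw [abs_of_nonneg (hb1 x y hx')]
    exact hb3 x y hx' hy'
end

section
/- Let X be a real Banach space with dim X ≥ 2, q ∈ ℝ, and let F : X → ℝ be positively q-homogeneous, i.e. F(λx) = λ^q F(x) for all λ > 0 and x ∈ X. Then for every x ∈ X with x ≠ 0, every x* ∈ X* and every y ∈ X: ‖x‖^q · δ_{F, x/‖x‖}^{x*/‖x‖^{q−1}}(‖x−y‖/‖x‖) ≤ |Δ_F^{x*}(y,x)| ≤ ‖x‖^q · ρ_{F, x/‖x‖}^{x*/‖x‖^{q−1}}(‖x−y‖/‖x‖). Moreover, x*/‖x‖^{q−1} is a subgradient of F at x/‖x‖ if and only if x* is a subgradient of F at x. -/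
open scoped ENNReal

/-- if `F` is positively `q`-homogeneous, then for `x ≠ 0`, any `x* ∈ X*`, `y ∈ X`:
`‖x‖^q · δ_{F,x/‖x‖}^{x*/‖x‖^{q−1}}(‖x−y‖/‖x‖) ≤ |Δ_F^{x*}(y,x)|
  ≤ ‖x‖^q · ρ_{F,x/‖x‖}^{x*/‖x‖^{q−1}}(‖x−y‖/‖x‖)`,
and `x*/‖x‖^{q−1} ∈ ∂F(x/‖x‖) ↔ x* ∈ ∂F(x)`. -/
theorem stmt5 (X : Type*) [NormedAddCommGroup X] [NormedSpace ℝ X] [CompleteSpace X]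
    (hdim : 2 ≤ Module.rank ℝ X)
    (q : ℝ) (F : X → ℝ)
    (hF : ∀ l : ℝ, 0 < l → ∀ x : X, F (l • x) = l ^ q * F x)
    (x : X) (hx : x ≠ 0) (xs : X →L[ℝ] ℝ) :
    (∀ y : X,
      ENNReal.ofReal (‖x‖ ^ q) *
          deltaF F (‖x‖⁻¹ • x) ((‖x‖ ^ (q - 1))⁻¹ • xs) (‖x - y‖ / ‖x‖) ≤
        ENNReal.ofReal |breg F xs y x| ∧
      ENNReal.ofReal |breg F xs y x| ≤
        ENNReal.ofReal (‖x‖ ^ q) *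
          rhoF F (‖x‖⁻¹ • x) ((‖x‖ ^ (q - 1))⁻¹ • xs) (‖x - y‖ / ‖x‖)) ∧
    (IsSubgradient F (‖x‖⁻¹ • x) ((‖x‖ ^ (q - 1))⁻¹ • xs) ↔ IsSubgradient F x xs) := by
  have ht : 0 < ‖x‖ := norm_pos_iff.mpr hx
  have hinv : (0:ℝ) < ‖x‖⁻¹ := inv_pos.mpr ht
  have htq : (0:ℝ) < ‖x‖ ^ q := Real.rpow_pos_of_pos ht q
  have hiq : (0:ℝ) < ‖x‖⁻¹ ^ q := Real.rpow_pos_of_pos hinv q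
  have hmulq : ‖x‖ ^ q * ‖x‖⁻¹ ^ q = 1 := by
    rw [← Real.mul_rpow ht.le hinv.le, mul_inv_cancel₀ ht.ne', Real.one_rpow]
  have hcoef : ((‖x‖ ^ (q-1))⁻¹ : ℝ) = ‖x‖⁻¹ ^ (q-1) := (Real.inv_rpow ht.le _).symm
  have hbreg : ∀ y : X, breg F ((‖x‖ ^ (q-1))⁻¹ • xs) (‖x‖⁻¹ • y) (‖x‖⁻¹ • x)
      = ‖x‖⁻¹ ^ q * breg F xs y x := by
    intro y
    have hs : (‖x‖⁻¹ • y - ‖x‖⁻¹ • x) = ‖x‖⁻¹ • (y - x) := (smul_sub _ _ _).symm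
    simp only [breg, hF _ hinv, hs, ContinuousLinearMap.smul_apply,
      ContinuousLinearMap.map_smul, smul_eq_mul, hcoef]
    have h1 : ‖x‖⁻¹ ^ (q-1) * ‖x‖⁻¹ = ‖x‖⁻¹ ^ q := by
      nth_rewrite 2 [← Real.rpow_one ‖x‖⁻¹]
      rw [← Real.rpow_add hinv]; ring_nf
    rw [← mul_assoc, h1]; ring
  have hnorm : ∀ y : X, ‖‖x‖⁻¹ • y - ‖x‖⁻¹ • x‖ = ‖x - y‖ / ‖x‖ := by
    intro y
    rw [← smul_sub, norm_smul, norm_sub_rev]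
    simp [Real.norm_of_nonneg hinv.le, div_eq_inv_mul, mul_comm]
  have habs : ∀ y : X, |breg F xs y x|
      = ‖x‖ ^ q * |breg F ((‖x‖ ^ (q-1))⁻¹ • xs) (‖x‖⁻¹ • y) (‖x‖⁻¹ • x)| := by
    intro y
    rw [hbreg y, abs_mul, abs_of_pos hiq, ← mul_assoc, hmulq, one_mul]
  constructor
  · intro y
    constructor
    · have hmem : (‖x‖⁻¹ • y) ∈ {z : X | ‖z - ‖x‖⁻¹ • x‖ = ‖x - y‖ / ‖x‖} := hnorm y
      have h1 : deltaF F (‖x‖⁻¹ • x) ((‖x‖ ^ (q-1))⁻¹ • xs) (‖x - y‖ / ‖x‖)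
          ≤ ENNReal.ofReal |breg F ((‖x‖ ^ (q-1))⁻¹ • xs) (‖x‖⁻¹ • y) (‖x‖⁻¹ • x)| :=
        iInf₂_le _ hmem
      calc ENNReal.ofReal (‖x‖ ^ q) *
            deltaF F (‖x‖⁻¹ • x) ((‖x‖ ^ (q-1))⁻¹ • xs) (‖x - y‖ / ‖x‖)
          ≤ ENNReal.ofReal (‖x‖ ^ q) *
            ENNReal.ofReal |breg F ((‖x‖ ^ (q-1))⁻¹ • xs) (‖x‖⁻¹ • y) (‖x‖⁻¹ • x)| :=
            mul_le_mul_right h1 _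
        _ = ENNReal.ofReal |breg F xs y x| := by
            rw [← ENNReal.ofReal_mul htq.le, ← habs y]
    · have hmem : (‖x‖⁻¹ • y) ∈ {z : X | ‖z - ‖x‖⁻¹ • x‖ = ‖x - y‖ / ‖x‖} := hnorm y
      have h1 : ENNReal.ofReal |breg F ((‖x‖ ^ (q-1))⁻¹ • xs) (‖x‖⁻¹ • y) (‖x‖⁻¹ • x)|
          ≤ rhoF F (‖x‖⁻¹ • x) ((‖x‖ ^ (q-1))⁻¹ • xs) (‖x - y‖ / ‖x‖) :=
        le_iSup₂ (f := fun z (_ : z ∈ {z : X | ‖z - ‖x‖⁻¹ • x‖ = ‖x - y‖ / ‖x‖}) =>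
          ENNReal.ofReal |breg F ((‖x‖ ^ (q-1))⁻¹ • xs) z (‖x‖⁻¹ • x)|) _ hmem
      calc ENNReal.ofReal |breg F xs y x|
          = ENNReal.ofReal (‖x‖ ^ q) *
            ENNReal.ofReal |breg F ((‖x‖ ^ (q-1))⁻¹ • xs) (‖x‖⁻¹ • y) (‖x‖⁻¹ • x)| := by
            rw [← ENNReal.ofReal_mul htq.le, ← habs y]
        _ ≤ _ := mul_le_mul_right h1 _
  · have hiff : ∀ (G : X → ℝ) (z : X) (φ : X →L[ℝ] ℝ),
        IsSubgradient G z φ ↔ ∀ w : X, 0 ≤ breg G φ w z := by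
      intro G z φ
      constructor
      · intro h w; have := h w; simp only [breg]; linarith
      · intro h w; have := h w; simp only [breg] at this; linarith
    rw [hiff, hiff]
    constructor
    · intro h y
      have := h (‖x‖⁻¹ • y)
      rw [hbreg y] at this
      nlinarith [hiq]
    · intro h z
      have hz : ‖x‖⁻¹ • (‖x‖ • z) = z := by
        rw [smul_smul, inv_mul_cancel₀ ht.ne', one_smul]
      have := h (‖x‖ • z)
      have h2 := hbreg (‖x‖ • z)
      rw [hz] at h2
      rw [h2]
      exact mul_nonneg hiq.le this
end

section
/- Let X be a real Banach space with dim X ≥ 2, let F : X → ℝ be convex, x ∈ X and let x* ∈ X* be a subgradient of F at x. Then for every λ ≥ 1 and τ ≥ 0: ρ_{F,x}^{x*}(λτ) ≥ λ·ρ_{F,x}^{x*}(τ) and δ_{F,x}^{x*}(λτ) ≥ λ·δ_{F,x}^{x*}(τ). In particular ρ_{F,x}^{x*} and δ_{F,x}^{x*} are nondecreasing on [0,∞). -/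
open scoped ENNReal

/-! Since `x*` is a subgradient, `Δ(y, x) ≥ 0`, and `t ↦ Δ(x + t v, x)` is convex and vanishes at
`t = 0`, so `Δ(x + λ v, x) ≥ λ Δ(x + v, x)` for `λ ≥ 1`. The dilation `y ↦ x + λ (y - x)` maps the
sphere of radius `τ` about `x` onto the one of radius `λ τ`, which gives both inequalities;
monotonicity follows with `λ = τ₂ / τ₁`, as both moduli vanish at `0`. -/

open Set

theorem ConvexOn.mul_sub_le_sub_smul {E : Type*} [AddCommGroup E] [Module ℝ E] {s : Set E}
    {F : E → ℝ} (hF : ConvexOn ℝ s F) {x v : E} {l : ℝ} (hx : x ∈ s) (hxv : x + l • v ∈ s) (hl : 1 ≤ l) :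
    l * (F (x + v) - F x) ≤ F (x + l • v) - F x := by
  have hl0 : 0 < l := by linarith
  have hpt : (1 - l⁻¹) • x + l⁻¹ • (x + l • v) = x + v := by
    rw [smul_add, smul_smul, inv_mul_cancel₀ hl0.ne', one_smul]
    module
  have hconv := hF.2 hx hxv (sub_nonneg.2 (inv_le_one_of_one_le₀ hl)) (inv_nonneg.2 hl0.le)
    (sub_add_cancel 1 l⁻¹)
  rw [hpt, smul_eq_mul, smul_eq_mul] at hconv
  rw [← le_inv_mul_iff₀ hl0]
  linarith

section

variable {X : Type*} [NormedAddCommGroup X] [NormedSpace ℝ X]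
  {F : X → ℝ} {x : X} {φ : X →L[ℝ] ℝ}

theorem IsSubgradient.abs_breg (hφ : IsSubgradient F x φ) (y : X) :
    |breg F φ y x| = breg F φ y x :=
  abs_of_nonneg (by linarith [hφ y, show breg F φ y x = F y - F x - φ (y - x) from rfl])

theorem mul_breg_le_breg_smul (hF : ConvexOn ℝ univ F) {l : ℝ} (hl : 1 ≤ l) (v : X) :
    l * breg F φ (x + v) x ≤ breg F φ (x + l • v) x := by
  have := hF.mul_sub_le_sub_smul (mem_univ x) (mem_univ (x + l • v)) (v := v) hl
  simp only [breg, add_sub_cancel_left, map_smul, smul_eq_mul]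
  linarith

theorem ofReal_mul_abs_breg_le (hF : ConvexOn ℝ univ F) (hφ : IsSubgradient F x φ)
    {l : ℝ} (hl : 1 ≤ l) (v : X) :
    ENNReal.ofReal l * ENNReal.ofReal |breg F φ (x + v) x| ≤
      ENNReal.ofReal |breg F φ (x + l • v) x| := by
  rw [← ENNReal.ofReal_mul (by linarith), hφ.abs_breg, hφ.abs_breg]
  exact ENNReal.ofReal_le_ofReal (mul_breg_le_breg_smul hF hl v)

theorem norm_add_smul_sub {l : ℝ} (hl : 0 ≤ l) (v : X) : ‖x + l • v - x‖ = l * ‖v‖ := by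
  rw [add_sub_cancel_left, norm_smul, Real.norm_of_nonneg hl]

theorem ofReal_mul_rhoF_le (hF : ConvexOn ℝ univ F) (hφ : IsSubgradient F x φ)
    {l : ℝ} (hl : 1 ≤ l) (τ : ℝ) :
    ENNReal.ofReal l * rhoF F x φ τ ≤ rhoF F x φ (l * τ) := by
  simp only [rhoF, ENNReal.mul_iSup]
  refine iSup₂_le fun y (hy : ‖y - x‖ = τ) => ?_
  calc ENNReal.ofReal l * ENNReal.ofReal |breg F φ y x|
      ≤ ENNReal.ofReal |breg F φ (x + l • (y - x)) x| := by
        simpa using ofReal_mul_abs_breg_le hF hφ hl (y - x)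
    _ ≤ _ := le_iSup₂ (f := fun z (_ : z ∈ {z : X | ‖z - x‖ = l * τ}) =>
        ENNReal.ofReal |breg F φ z x|) _ (by simp only [mem_ofPred_eq,
          norm_add_smul_sub (by linarith : (0 : ℝ) ≤ l), hy])

theorem ofReal_mul_deltaF_le (hF : ConvexOn ℝ univ F) (hφ : IsSubgradient F x φ)
    {l : ℝ} (hl : 1 ≤ l) (τ : ℝ) :
    ENNReal.ofReal l * deltaF F x φ τ ≤ deltaF F x φ (l * τ) := by
  have hl0 : 0 < l := by linarith
  refine le_iInf₂ fun z (hz : ‖z - x‖ = l * τ) => ?_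
  have hy : ‖x + l⁻¹ • (z - x) - x‖ = τ := by
    rw [norm_add_smul_sub (inv_nonneg.2 hl0.le), hz, inv_mul_cancel_left₀ hl0.ne']
  calc ENNReal.ofReal l * deltaF F x φ τ
      ≤ ENNReal.ofReal l * ENNReal.ofReal |breg F φ (x + l⁻¹ • (z - x)) x| :=
        mul_le_mul_right (iInf₂_le (f := fun y (_ : y ∈ {y : X | ‖y - x‖ = τ}) =>
          ENNReal.ofReal |breg F φ y x|) _ hy) _
    _ ≤ ENNReal.ofReal |breg F φ z x| := by
        simpa [smul_smul, mul_inv_cancel₀ hl0.ne'] using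
          ofReal_mul_abs_breg_le hF hφ hl (l⁻¹ • (z - x))

theorem rhoF_zero : rhoF F x φ 0 = 0 := by
  simp [rhoF, sub_eq_zero, breg]

theorem deltaF_zero : deltaF F x φ 0 = 0 := by
  simp [deltaF, sub_eq_zero, breg]

end

theorem monotoneOn_of_ofReal_mul_le {g : ℝ → ℝ≥0∞} (hg0 : g 0 = 0)
    (hg : ∀ l τ : ℝ, 1 ≤ l → 0 ≤ τ → ENNReal.ofReal l * g τ ≤ g (l * τ)) :
    MonotoneOn g (Ici 0) := by
  intro τ₁ (h₁ : 0 ≤ τ₁) τ₂ _ h₁₂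
  rcases h₁.eq_or_lt with rfl | h₁
  · simp [hg0]
  have hl : 1 ≤ τ₂ / τ₁ := (one_le_div h₁).2 h₁₂
  calc g τ₁ ≤ ENNReal.ofReal (τ₂ / τ₁) * g τ₁ :=
        le_mul_of_one_le_left zero_le (ENNReal.one_le_ofReal.2 hl)
    _ ≤ g τ₂ := by simpa [div_mul_cancel₀ τ₂ h₁.ne'] using hg _ _ hl h₁.le

theorem stmt6_general (X : Type*) [NormedAddCommGroup X] [NormedSpace ℝ X]
    (F : X → ℝ) (hF : ConvexOn ℝ Set.univ F)
    (x : X) (xs : X →L[ℝ] ℝ) (hxs : IsSubgradient F x xs) :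
    (∀ l τ : ℝ, 1 ≤ l → 0 ≤ τ →
      ENNReal.ofReal l * rhoF F x xs τ ≤ rhoF F x xs (l * τ) ∧
      ENNReal.ofReal l * deltaF F x xs τ ≤ deltaF F x xs (l * τ)) ∧
    (∀ τ₁ τ₂ : ℝ, 0 ≤ τ₁ → τ₁ ≤ τ₂ →
      rhoF F x xs τ₁ ≤ rhoF F x xs τ₂ ∧ deltaF F x xs τ₁ ≤ deltaF F x xs τ₂) := by
  have hrho l τ (hl : 1 ≤ l) (_ : 0 ≤ τ) := ofReal_mul_rhoF_le hF hxs hl τ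
  have hdelta l τ (hl : 1 ≤ l) (_ : 0 ≤ τ) := ofReal_mul_deltaF_le hF hxs hl τ
  refine ⟨fun l τ hl hτ => ⟨hrho l τ hl hτ, hdelta l τ hl hτ⟩, fun τ₁ τ₂ h₁ h₁₂ => ⟨?_, ?_⟩⟩
  · exact monotoneOn_of_ofReal_mul_le rhoF_zero hrho h₁ (h₁.trans h₁₂) h₁₂
  · exact monotoneOn_of_ofReal_mul_le deltaF_zero hdelta h₁ (h₁.trans h₁₂) h₁₂

/-- for convex `F` and `x* ∈ ∂F(x)`, for all `λ ≥ 1`, `τ ≥ 0`: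
`ρ_{F,x}^{x*}(λτ) ≥ λ·ρ_{F,x}^{x*}(τ)` and `δ_{F,x}^{x*}(λτ) ≥ λ·δ_{F,x}^{x*}(τ)`;
in particular both moduli are nondecreasing on `[0,∞)`. -/
theorem stmt6 (X : Type*) [NormedAddCommGroup X] [NormedSpace ℝ X] [CompleteSpace X]
    (hdim : 2 ≤ Module.rank ℝ X)
    (F : X → ℝ) (hF : ConvexOn ℝ Set.univ F)
    (x : X) (xs : X →L[ℝ] ℝ) (hxs : IsSubgradient F x xs) :
    (∀ l τ : ℝ, 1 ≤ l → 0 ≤ τ →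
      ENNReal.ofReal l * rhoF F x xs τ ≤ rhoF F x xs (l * τ) ∧
      ENNReal.ofReal l * deltaF F x xs τ ≤ deltaF F x xs (l * τ)) ∧
    (∀ τ₁ τ₂ : ℝ, 0 ≤ τ₁ → τ₁ ≤ τ₂ →
      rhoF F x xs τ₁ ≤ rhoF F x xs τ₂ ∧ deltaF F x xs τ₁ ≤ deltaF F x xs τ₂) :=
  stmt6_general X F hF x xs hxs
end

section
/- Let X be a real Banach space with dim X ≥ 2, F : X → ℝ, f : ℝ → ℝ, x ∈ X, x* ∈ X* and t ∈ ℝ. Assume the one-dimensional modulus ρ_{f,F(x)}^{t}, defined by ρ_{f,s}^{t}(h) = max_{σ ∈ {−1,+1}} |f(s+σh) − f(s) − tσh| for h ≥ 0, is nondecreasing, and assume ρ_{F,x}^{x*}(τ) < ∞. Then for all τ ≥ 0: ρ_{f∘F, x}^{t·x*}(τ) ≤ |t|·ρ_{F,x}^{x*}(τ) + ρ_{f,F(x)}^{t}(‖x*‖τ + ρ_{F,x}^{x*}(τ)). -/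
open scoped ENNReal

/-- The one-dimensional modulus of smoothness of `f : ℝ → ℝ` at `s` w.r.t. slope `t`:
`ρ_{f,s}^{t}(h) = max_{σ ∈ {−1,+1}} |f(s+σh) − f(s) − tσh|`. -/
noncomputable def rho1 (f : ℝ → ℝ) (s t h : ℝ) : ℝ :=
  max |f (s + h) - f s - t * h| |f (s - h) - f s + t * h|

theorem abs_sub_sub_mul_le_rho1 (f : ℝ → ℝ) (s t h : ℝ) :
    |f (s + h) - f s - t * h| ≤ rho1 f s t |h| := by
  rcases le_or_gt 0 h with h0 | h0
  · rw [abs_of_nonneg h0]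
    exact le_max_left _ _
  · have hneg : f (s - |h|) - f s + t * |h| = f (s + h) - f s - t * h := by
      rw [abs_of_neg h0, sub_neg_eq_add]
      ring
    rw [← hneg]
    exact le_max_right _ _

section Modulus

variable {X : Type*} [NormedAddCommGroup X] [NormedSpace ℝ X]

theorem abs_breg_le_toReal_rhoF {F : X → ℝ} {x y : X} {φ : X →L[ℝ] ℝ} {τ : ℝ}
    (hfin : rhoF F x φ τ ≠ ⊤) (hy : ‖y - x‖ = τ) :
    |breg F φ y x| ≤ (rhoF F x φ τ).toReal :=
  (ENNReal.ofReal_le_iff_le_toReal hfin).1 (le_iSup₂_of_le (f := fun y (_ : ‖y - x‖ = τ) =>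
    ENNReal.ofReal |breg F φ y x|) y hy le_rfl)

theorem abs_sub_le_norm_mul_add_abs_breg (F : X → ℝ) (φ : X →L[ℝ] ℝ) (x y : X) :
    |F y - F x| ≤ ‖φ‖ * ‖y - x‖ + |breg F φ y x| := by
  have hsplit : F y - F x = φ (y - x) + breg F φ y x := by simp only [breg]; ring
  calc |F y - F x| ≤ |φ (y - x)| + |breg F φ y x| := hsplit ▸ abs_add_le _ _
    _ ≤ ‖φ‖ * ‖y - x‖ + |breg F φ y x| := by
      gcongr
      exact φ.le_opNorm _

theorem breg_comp (f : ℝ → ℝ) (F : X → ℝ) (t : ℝ) (φ : X →L[ℝ] ℝ) (x y : X) :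
    breg (fun z => f (F z)) (t • φ) y x =
      (f (F y) - f (F x) - t * (F y - F x)) + t * breg F φ y x := by
  simp only [breg, smul_apply, smul_eq_mul]
  ring

theorem abs_breg_comp_le (f : ℝ → ℝ) (F : X → ℝ) (t : ℝ) (φ : X →L[ℝ] ℝ) (x y : X) :
    |breg (fun z => f (F z)) (t • φ) y x| ≤
      |t| * |breg F φ y x| + rho1 f (F x) t |F y - F x| := by
  have hrho1 := abs_sub_sub_mul_le_rho1 f (F x) t (F y - F x)
  rw [add_sub_cancel] at hrho1
  calc |breg (fun z => f (F z)) (t • φ) y x|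
      ≤ |f (F y) - f (F x) - t * (F y - F x)| + |t * breg F φ y x| := by
        rw [breg_comp]
        exact abs_add_le _ _
    _ ≤ |t| * |breg F φ y x| + rho1 f (F x) t |F y - F x| := by
        rw [abs_mul]
        linarith

end Modulus

theorem stmt7_general (X : Type*) [NormedAddCommGroup X] [NormedSpace ℝ X]
    (F : X → ℝ) (f : ℝ → ℝ) (x : X) (xs : X →L[ℝ] ℝ) (t : ℝ)
    (hmono : ∀ h₁ h₂ : ℝ, 0 ≤ h₁ → h₁ ≤ h₂ → rho1 f (F x) t h₁ ≤ rho1 f (F x) t h₂) :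
    ∀ τ : ℝ, 0 ≤ τ → rhoF F x xs τ ≠ ⊤ →
      rhoF (fun z : X => f (F z)) x (t • xs) τ ≤
        ENNReal.ofReal (|t| * (rhoF F x xs τ).toReal +
          rho1 f (F x) t (‖xs‖ * τ + (rhoF F x xs τ).toReal)) := by
  intro τ _ hfin
  refine iSup₂_le fun y (hy : ‖y - x‖ = τ) => ENNReal.ofReal_le_ofReal ?_
  have hΔ := abs_breg_le_toReal_rhoF hfin hy
  have hincr : |F y - F x| ≤ ‖xs‖ * τ + (rhoF F x xs τ).toReal := by
    have := abs_sub_le_norm_mul_add_abs_breg F xs x y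
    rw [hy] at this
    linarith
  calc |breg (fun z => f (F z)) (t • xs) y x|
      ≤ |t| * |breg F xs y x| + rho1 f (F x) t |F y - F x| := abs_breg_comp_le f F t xs x y
    _ ≤ |t| * (rhoF F x xs τ).toReal + rho1 f (F x) t (‖xs‖ * τ + (rhoF F x xs τ).toReal) := by
        gcongr
        exact hmono _ _ (abs_nonneg _) hincr

/-- chain rule: if `ρ_{f,F(x)}^{t}` is nondecreasing (on `h ≥ 0`) and
`ρ_{F,x}^{x*}(τ) < ∞`, then
`ρ_{f∘F,x}^{t·x*}(τ) ≤ |t|·ρ_{F,x}^{x*}(τ) + ρ_{f,F(x)}^{t}(‖x*‖τ + ρ_{F,x}^{x*}(τ))`. -/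
theorem stmt7 (X : Type*) [NormedAddCommGroup X] [NormedSpace ℝ X] [CompleteSpace X]
    (hdim : 2 ≤ Module.rank ℝ X)
    (F : X → ℝ) (f : ℝ → ℝ) (x : X) (xs : X →L[ℝ] ℝ) (t : ℝ)
    (hmono : ∀ h₁ h₂ : ℝ, 0 ≤ h₁ → h₁ ≤ h₂ → rho1 f (F x) t h₁ ≤ rho1 f (F x) t h₂) :
    ∀ τ : ℝ, 0 ≤ τ → rhoF F x xs τ ≠ ⊤ →
      rhoF (fun z : X => f (F z)) x (t • xs) τ ≤
        ENNReal.ofReal (|t| * (rhoF F x xs τ).toReal +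
          rho1 f (F x) t (‖xs‖ * τ + (rhoF F x xs τ).toReal)) :=
  stmt7_general X F f x xs t hmono
end

section
/- Let X be a real Banach space with dim X ≥ 2, let F : X → ℝ be convex, x ∈ X and let x* ∈ X* be a subgradient of F at x. Then for every τ ≥ 0: (δ_{F,x}^{x*})*(τ) = ρ_{F*,x*}^{x}(τ), where (δ_{F,x}^{x*})*(τ) = sup_{ε ≥ 0} (τε − δ_{F,x}^{x*}(ε)) and ρ_{F*,x*}^{x}(τ) = sup{F*(y*) − F*(x*) − ⟨y* − x*, x⟩ : y* ∈ X*, ‖y* − x*‖ = τ}. -/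
open scoped ENNReal

/-- The convex conjugate `F*(φ) = sup_{z ∈ X} (⟨φ,z⟩ − F(z)) ∈ ℝ ∪ {+∞}` (as `EReal`). -/
noncomputable def fconj {X : Type*} [NormedAddCommGroup X] [NormedSpace ℝ X]
    (F : X → ℝ) (φ : X →L[ℝ] ℝ) : EReal :=
  ⨆ z : X, ((φ z - F z : ℝ) : EReal)

/-- `ρ_{F*,x*}^{x}(τ) = sup {F*(y*) − F*(x*) − ⟨y*−x*, x⟩ : ‖y*−x*‖ = τ}` (as `EReal`). -/
noncomputable def rhoFconj {X : Type*} [NormedAddCommGroup X] [NormedSpace ℝ X]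
    (F : X → ℝ) (xs : X →L[ℝ] ℝ) (x : X) (τ : ℝ) : EReal :=
  ⨆ ψ ∈ {ψ : X →L[ℝ] ℝ | ‖ψ - xs‖ = τ},
    (fconj F ψ - fconj F xs - (((ψ - xs) x : ℝ) : EReal))

private lemma ereal_le_of_forall_lt {a b : EReal}
    (h : ∀ c : ℝ, (c : EReal) < a → (c : EReal) ≤ b) : a ≤ b := by
  by_contra hab
  push_neg at hab
  obtain ⟨c, hbc, hca⟩ := EReal.exists_between_coe_real hab
  exact absurd (h c hca) (not_le.2 hbc)

private lemma ereal_iSup_sub_coe {ι : Sort*} (f : ι → EReal) (r : ℝ) :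
    (⨆ i, f i) - (r : EReal) = ⨆ i, (f i - (r : EReal)) := by
  apply le_antisymm
  · apply ereal_le_of_forall_lt
    intro c hc
    rw [EReal.lt_sub_iff_add_lt (Or.inl (EReal.coe_ne_bot r))
      (Or.inl (EReal.coe_ne_top r))] at hc
    obtain ⟨i, hi⟩ := lt_iSup_iff.1 hc
    refine le_trans ?_ (le_iSup _ i)
    rw [EReal.le_sub_iff_add_le (Or.inl (EReal.coe_ne_bot r)) (Or.inl (EReal.coe_ne_top r))]
    exact hi.le
  · exact iSup_le fun i => EReal.sub_le_sub (le_iSup f i) le_rfl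

/-- for convex `F` and `x* ∈ ∂F(x)`, for all `τ ≥ 0`:
`(δ_{F,x}^{x*})^*(τ) = ρ_{F*,x*}^{x}(τ)`, where
`(δ_{F,x}^{x*})^*(τ) = sup_{ε ≥ 0} (τε − δ_{F,x}^{x*}(ε))`. -/
theorem stmt8 (X : Type*) [NormedAddCommGroup X] [NormedSpace ℝ X] [CompleteSpace X]
    (hdim : 2 ≤ Module.rank ℝ X)
    (F : X → ℝ) (hF : ConvexOn ℝ Set.univ F)
    (x : X) (xs : X →L[ℝ] ℝ) (hxs : IsSubgradient F x xs) :
    ∀ τ : ℝ, 0 ≤ τ →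
      (⨆ ε ∈ {ε : ℝ | 0 ≤ ε}, (((τ * ε : ℝ) : EReal) - ((deltaF F x xs ε : ℝ≥0∞) : EReal))) =
        rhoFconj F xs x τ := by
  intro τ hτ
  have hnt : Nontrivial X := by
    rw [← rank_pos_iff_nontrivial (R := ℝ)]
    exact lt_of_lt_of_le (by norm_num) hdim
  set D : X → ℝ := fun z => breg F xs z x with hDdef
  have hDb : ∀ z, breg F xs z x = D z := fun _ => rfl
  have hD0 : ∀ z, 0 ≤ D z := fun z => by
    have := hxs z; simp only [hDdef, breg]; linarith
  have habsD : ∀ z, |D z| = D z := fun z => abs_of_nonneg (hD0 z)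
  set S : EReal := ⨆ z : X, ((τ * ‖z - x‖ - D z : ℝ) : EReal) with hSdef
  have sphere_ne : ∀ ε : ℝ, 0 ≤ ε → ∃ z : X, ‖z - x‖ = ε := by
    intro ε hε
    obtain ⟨v, hv⟩ := exists_ne (0 : X)
    refine ⟨x + (ε / ‖v‖) • v, ?_⟩
    rw [add_sub_cancel_left, norm_smul, Real.norm_eq_abs,
      abs_of_nonneg (div_nonneg hε (norm_nonneg v)),
      div_mul_cancel₀ _ (norm_ne_zero_iff.2 hv)]
  -- deltaF ≤ value at a point of the sphere
  have hdelta_le : ∀ (ε : ℝ) (z : X), ‖z - x‖ = ε →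
      deltaF F x xs ε ≤ ENNReal.ofReal (D z) := by
    intro ε z hz
    have := iInf₂_le (f := fun (y : X) (_ : y ∈ {y : X | ‖y - x‖ = ε}) =>
      ENNReal.ofReal |breg F xs y x|) z hz
    rwa [hDb z, habsD z] at this
  -- LHS = S
  have hLHS : (⨆ ε ∈ {ε : ℝ | 0 ≤ ε},
      (((τ * ε : ℝ) : EReal) - ((deltaF F x xs ε : ℝ≥0∞) : EReal))) = S := by
    apply le_antisymm
    · refine iSup₂_le fun ε hε => ?_
      have hε' : (0:ℝ) ≤ ε := hε
      obtain ⟨z₀, hz₀⟩ := sphere_ne ε hε'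
      have hne_top : deltaF F x xs ε ≠ ⊤ :=
        ne_top_of_le_ne_top ENNReal.ofReal_ne_top (hdelta_le ε z₀ hz₀)
      set d : ℝ := (deltaF F x xs ε).toReal with hd
      have hcoe : ((deltaF F x xs ε : ℝ≥0∞) : EReal) = (d : EReal) := by
        rw [hd, ← EReal.toReal_coe_ennreal]
        exact (EReal.coe_toReal (by simpa using hne_top)
          (by simp)).symm
      rw [hcoe, ← EReal.coe_sub]
      apply ereal_le_of_forall_lt
      intro c hc
      rw [EReal.coe_lt_coe_iff] at hc
      set θ : ℝ := τ * ε - d - c with hθdef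
      have hθ : 0 < θ := by simp only [hθdef]; linarith
      have hlt : deltaF F x xs ε < deltaF F x xs ε + ENNReal.ofReal θ :=
        ENNReal.lt_add_right hne_top (ENNReal.ofReal_pos.2 hθ).ne'
      have hlt2 : deltaF F x xs ε < ENNReal.ofReal (d + θ) := by
        rw [ENNReal.ofReal_add ENNReal.toReal_nonneg hθ.le,
          ENNReal.ofReal_toReal hne_top]
        exact hlt
      rw [deltaF] at hlt2
      obtain ⟨y, hy, hylt⟩ : ∃ y, ∃ _ : y ∈ {y : X | ‖y - x‖ = ε},
          ENNReal.ofReal |breg F xs y x| < ENNReal.ofReal (d + θ) := by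
        simpa [iInf_lt_iff] using hlt2
      have hyD : D y < d + θ := by
        have := (ENNReal.ofReal_lt_ofReal_iff_of_nonneg (abs_nonneg _)).1 hylt
        have h2 : |D y| = |breg F xs y x| := rfl
        calc D y ≤ |D y| := le_abs_self _
          _ < d + θ := by rw [h2]; exact this
      have hyx : ‖y - x‖ = ε := hy
      refine le_trans ?_ (le_iSup (fun z : X => ((τ * ‖z - x‖ - D z : ℝ) : EReal)) y)
      rw [EReal.coe_le_coe_iff, hyx]
      simp only [hθdef] at hyD ⊢
      linarith
    · refine iSup_le fun z => ?_
      refine le_trans ?_ (le_iSup₂_of_le ‖z - x‖ (norm_nonneg _) le_rfl)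
      have h1 : ((deltaF F x xs ‖z - x‖ : ℝ≥0∞) : EReal) ≤ ((D z : ℝ) : EReal) := by
        refine le_trans (EReal.coe_ennreal_le_coe_ennreal_iff.2
          (hdelta_le ‖z - x‖ z rfl)) ?_
        rw [EReal.coe_ennreal_ofReal, max_eq_left (hD0 z)]
      calc ((τ * ‖z - x‖ - D z : ℝ) : EReal)
          = ((τ * ‖z - x‖ : ℝ) : EReal) - ((D z : ℝ) : EReal) := by rw [← EReal.coe_sub]
        _ ≤ ((τ * ‖z - x‖ : ℝ) : EReal) - ((deltaF F x xs ‖z - x‖ : ℝ≥0∞) : EReal) :=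
            EReal.sub_le_sub le_rfl h1
  -- fconj at xs
  have hc : fconj F xs = ((xs x - F x : ℝ) : EReal) := by
    apply le_antisymm
    · refine iSup_le fun z => ?_
      rw [EReal.coe_le_coe_iff]
      have h1 := hxs z
      have h2 : xs (z - x) = xs z - xs x := map_sub xs z x
      linarith
    · exact le_iSup_of_le x le_rfl
  -- Term computation
  have hterm : ∀ ψ : X →L[ℝ] ℝ,
      fconj F ψ - fconj F xs - (((ψ - xs) x : ℝ) : EReal) =
      ⨆ z : X, (((ψ - xs) (z - x) - D z : ℝ) : EReal) := by
    intro ψ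
    rw [hc, fconj, ereal_iSup_sub_coe, ereal_iSup_sub_coe]
    congr 1
    ext z
    rw [← EReal.coe_sub, ← EReal.coe_sub, EReal.coe_eq_coe_iff]
    simp only [hDdef, breg, ContinuousLinearMap.sub_apply, map_sub]
    ring
  -- RHS = S
  have hRHS : rhoFconj F xs x τ = S := by
    apply le_antisymm
    · refine iSup₂_le fun ψ hψ => ?_
      rw [hterm ψ]
      refine iSup_le fun z => ?_
      refine le_trans ?_ (le_iSup (fun z : X => ((τ * ‖z - x‖ - D z : ℝ) : EReal)) z)
      rw [EReal.coe_le_coe_iff]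
      have h1 : (ψ - xs) (z - x) ≤ τ * ‖z - x‖ := by
        calc (ψ - xs) (z - x) ≤ |(ψ - xs) (z - x)| := le_abs_self _
          _ = ‖(ψ - xs) (z - x)‖ := rfl
          _ ≤ ‖ψ - xs‖ * ‖z - x‖ := (ψ - xs).le_opNorm _
          _ = τ * ‖z - x‖ := by rw [hψ]
      linarith
    · refine iSup_le fun z => ?_
      obtain ⟨g, hg1, hgz⟩ := exists_dual_vector' ℝ (z - x)
      set ψ : X →L[ℝ] ℝ := xs + τ • g with hψdef
      have hsub : ψ - xs = τ • g := by rw [hψdef]; abel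
      have hψnorm : ‖ψ - xs‖ = τ := by
        rw [hsub, norm_smul τ g, Real.norm_eq_abs, abs_of_nonneg hτ, hg1, mul_one]
      refine le_trans ?_ (le_iSup₂_of_le ψ hψnorm le_rfl)
      rw [hterm ψ]
      refine le_trans ?_ (le_iSup _ z)
      rw [EReal.coe_le_coe_iff, hsub]
      have hgz' : g (z - x) = ‖z - x‖ := by exact_mod_cast hgz
      have : (τ • g) (z - x) = τ * ‖z - x‖ := by
        rw [ContinuousLinearMap.smul_apply, smul_eq_mul, hgz']
      rw [this]
  rw [hLHS, hRHS]
end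

section
/- Let X be a real Banach space with dim X ≥ 2, let F : X → ℝ be convex, x ∈ X, let x* ∈ X* be a subgradient of F at x, and let p > 1 with conjugate exponent p' (1/p + 1/p' = 1). Then F is p-convex at x w.r.t. x* (i.e. there exist K, τ̄ > 0 with δ_{F,x}^{x*}(τ) ≥ Kτ^p for all 0 < τ ≤ τ̄) if and only if F* is p'-smooth at x* w.r.t. x (i.e. there exist K', τ̄' > 0 with ρ_{F*,x*}^{x}(τ) ≤ K'τ^{p'} for all 0 < τ ≤ τ̄'). -/
open scoped ENNReal

/-!
Everything reduces to the shifted linearization error `g v = Δ_F^{x*}(x + v, x)`, a convex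
function with `g ≥ 0 = g 0`, for which `ρ_{F*,x*}^{x}(τ)` is the supremum of the conjugate
`g* φ = ⨆ v, φ v - g v` over `‖φ‖ = τ`. If `g v ≥ K ‖v‖^p` for `‖v‖ ≤ τ̄`, convexity makes `g`
grow at least linearly, `g v ≥ K τ̄^(p-1) ‖v‖`, beyond that ball; so `φ v - g v ≤ ‖φ‖ ‖v‖ - g v`
is `≤ 0` far out and bounded by Young's inequality near `0`, giving `g* φ ≤ K' ‖φ‖^p'`.
Conversely, testing `g*` against `s f` with `f` a norming functional of `v` and
`s = c ‖v‖^(p-1)` gives `g v ≥ s ‖v‖ - K' s^p' = (c - K' c^p') ‖v‖^p`, which is `c/2 ‖v‖^p`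
for a suitable `c`.
-/

open Set

lemma Real.HolderConjugate.exists_mul_le_add_rpow {p q K : ℝ} (hpq : p.HolderConjugate q)
    (hK : 0 < K) : ∃ K' > 0, ∀ a b : ℝ, 0 ≤ a → 0 ≤ b → a * b ≤ K * a ^ p + K' * b ^ q := by
  set A := (p * K) ^ p⁻¹
  have hA : 0 < A := by have := hpq.pos; positivity
  have hAp : A ^ p = p * K := Real.rpow_inv_rpow (by have := hpq.pos; positivity) hpq.ne_zero
  refine ⟨(q * A ^ q)⁻¹, by have := hpq.symm.pos; positivity, fun a b ha hb => ?_⟩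
  -- Young's inequality for the rescaled pair `(a A, b / A)`
  have h := Real.young_inequality_of_nonneg (mul_nonneg ha hA.le) (div_nonneg hb hA.le) hpq
  rw [Real.mul_rpow ha hA.le, hAp, Real.div_rpow hb hA.le] at h
  have hp := hpq.pos
  have hq := hpq.symm.pos
  have hAq : 0 < A ^ q := by positivity
  calc a * b = a * A * (b / A) := by field_simp
    _ ≤ _ := h
    _ = K * a ^ p + (q * A ^ q)⁻¹ * b ^ q := by field_simp

lemma exists_pos_mul_rpow_eq_half {K q : ℝ} (hK : 0 < K) (hq : q ≠ 1) :
    ∃ c > 0, K * c ^ q = c / 2 := by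
  set c := (2 * K)⁻¹ ^ (q - 1)⁻¹
  have hc : 0 < c := by positivity
  have hcq : c ^ (q - 1) = (2 * K)⁻¹ := Real.rpow_inv_rpow (by positivity) (sub_ne_zero.2 hq)
  refine ⟨c, hc, ?_⟩
  rw [Real.rpow_sub_one hc.ne'] at hcq
  field_simp at hcq ⊢
  linarith

lemma ConvexOn.apply_smul_le_mul {E : Type*} [AddCommGroup E] [Module ℝ E] {g : E → ℝ}
    (hg : ConvexOn ℝ univ g) (hg0 : g 0 = 0) (v : E) {l : ℝ} (hl0 : 0 ≤ l) (hl1 : l ≤ 1) :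
    g (l • v) ≤ l * g v := by
  simpa [hg0] using hg.2 (mem_univ 0) (mem_univ v) (sub_nonneg.2 hl1) hl0 (sub_add_cancel 1 l)

section Growth

variable {E : Type*} [NormedAddCommGroup E] [NormedSpace ℝ E]

def GrowsAtLeastRpow (g : E → ℝ) (p : ℝ) : Prop :=
  ∃ K τ : ℝ, 0 < K ∧ 0 < τ ∧ ∀ v : E, 0 < ‖v‖ → ‖v‖ ≤ τ → K * ‖v‖ ^ p ≤ g v

-- `⨆ v, φ v - g v` is the convex conjugate `g* φ`: this is local `q`-smoothness of `g*` at `0`.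
def ConjGrowsAtMostRpow (g : E → ℝ) (q : ℝ) : Prop :=
  ∃ K τ : ℝ, 0 < K ∧ 0 < τ ∧
    ∀ φ : E →L[ℝ] ℝ, 0 < ‖φ‖ → ‖φ‖ ≤ τ → ∀ v : E, φ v - g v ≤ K * ‖φ‖ ^ q

variable {g : E → ℝ} {p q : ℝ}

lemma ConvexOn.mul_norm_le_of_rpow_le {K τ : ℝ} (hg : ConvexOn ℝ univ g) (hg0 : g 0 = 0)
    (hτ : 0 < τ) (hgrowth : ∀ v : E, 0 < ‖v‖ → ‖v‖ ≤ τ → K * ‖v‖ ^ p ≤ g v) {v : E}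
    (hv : τ < ‖v‖) : K * τ ^ (p - 1) * ‖v‖ ≤ g v := by
  have hv0 : 0 < ‖v‖ := hτ.trans hv
  have hl : ‖(τ / ‖v‖) • v‖ = τ := by
    rw [norm_smul, Real.norm_of_nonneg (by positivity), div_mul_cancel₀ _ hv0.ne']
  have h := calc K * τ ^ p = K * ‖(τ / ‖v‖) • v‖ ^ p := by rw [hl]
    _ ≤ g ((τ / ‖v‖) • v) := hgrowth _ (by rwa [hl]) hl.le
    _ ≤ τ / ‖v‖ * g v := hg.apply_smul_le_mul hg0 v (by positivity) ((div_le_one hv0).2 hv.le)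
  rw [Real.rpow_sub_one hτ.ne']
  rw [div_mul_eq_mul_div, le_div_iff₀ hv0] at h
  field_simp
  linarith

theorem GrowsAtLeastRpow.conjGrowsAtMostRpow (hg : ConvexOn ℝ univ g) (hg0 : g 0 = 0)
    (hpq : p.HolderConjugate q) (h : GrowsAtLeastRpow g p) : ConjGrowsAtMostRpow g q := by
  obtain ⟨K, τ, hK, hτ, hgrowth⟩ := h
  obtain ⟨K', hK', hyoung⟩ := hpq.exists_mul_le_add_rpow hK
  refine ⟨K', K * τ ^ (p - 1), hK', by positivity, fun φ _ hφ v => ?_⟩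
  have hφv : φ v ≤ ‖φ‖ * ‖v‖ := (le_abs_self _).trans (φ.le_opNorm v)
  have hrem : 0 ≤ K' * ‖φ‖ ^ q := by positivity
  rcases (norm_nonneg v).eq_or_lt with hv0 | hv0
  · simp [norm_eq_zero.1 hv0.symm, hg0, hrem]
  rcases le_or_gt ‖v‖ τ with hvτ | hvτ
  · linarith [hgrowth v hv0 hvτ, hyoung ‖v‖ ‖φ‖ (norm_nonneg v) (norm_nonneg φ)]
  · have := hg.mul_norm_le_of_rpow_le hg0 hτ hgrowth hvτ
    nlinarith [mul_le_mul_of_nonneg_right hφ (norm_nonneg v)]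

theorem ConjGrowsAtMostRpow.growsAtLeastRpow (hpq : p.HolderConjugate q)
    (h : ConjGrowsAtMostRpow g q) : GrowsAtLeastRpow g p := by
  obtain ⟨K', τ', hK', hτ', hconj⟩ := h
  obtain ⟨c, hc, hcK⟩ := exists_pos_mul_rpow_eq_half hK' hpq.symm.lt.ne'
  have hp1 : p - 1 ≠ 0 := sub_ne_zero.2 hpq.lt.ne'
  refine ⟨c / 2, (τ' / c) ^ (p - 1)⁻¹, by positivity, by positivity, fun v hv0 hv => ?_⟩
  obtain ⟨f, hf, hfv⟩ := exists_dual_vector ℝ v hv0.ne'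
  set s := c * ‖v‖ ^ (p - 1)
  have hs : 0 < s := by positivity
  have hsτ : s ≤ τ' := by
    have := Real.rpow_le_rpow hv0.le hv (sub_pos.2 hpq.lt).le
    rw [Real.rpow_inv_rpow (by positivity) hp1] at this
    calc s ≤ c * (τ' / c) := mul_le_mul_of_nonneg_left this hc.le
      _ = τ' := by field_simp
  have hsf : ‖s • f‖ = s := by rw [norm_smul, hf, Real.norm_of_nonneg hs.le, mul_one]
  -- test `g` against the functional `s • f`, which norms `v`
  have h := hconj (s • f) (by rwa [hsf]) (by rwa [hsf]) v
  have e1 : s * ‖v‖ = c * ‖v‖ ^ p := by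
    rw [mul_assoc, ← Real.rpow_add_one hv0.ne', sub_add_cancel]
  have e2 : s ^ q = c ^ q * ‖v‖ ^ p := by
    rw [Real.mul_rpow hc.le (by positivity), ← Real.rpow_mul (norm_nonneg v), hpq.sub_one_mul_conj]
  have hsfv : (s • f) v = s * ‖v‖ := by simp [hfv]
  rw [hsf, hsfv, e1, e2, ← mul_assoc, hcK] at h
  linarith

theorem ConvexOn.growsAtLeastRpow_iff_conjGrowsAtMostRpow (hg : ConvexOn ℝ univ g)
    (hg0 : g 0 = 0) (hpq : p.HolderConjugate q) :
    GrowsAtLeastRpow g p ↔ ConjGrowsAtMostRpow g q :=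
  ⟨GrowsAtLeastRpow.conjGrowsAtMostRpow hg hg0 hpq, ConjGrowsAtMostRpow.growsAtLeastRpow hpq⟩

end Growth

section Subgradient

variable {X : Type*} [NormedAddCommGroup X] [NormedSpace ℝ X] {F : X → ℝ} {x : X}
  {xs : X →L[ℝ] ℝ}

lemma ConvexOn.breg_add_left (hF : ConvexOn ℝ univ F) (x : X) (xs : X →L[ℝ] ℝ) :
    ConvexOn ℝ univ fun v => breg F xs (x + v) x := by
  have h := ((hF.translate_right x).sub (xs.toLinearMap.concaveOn convex_univ)).add_const (-F x)
  rw [preimage_univ] at h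
  refine h.congr fun v _ => ?_
  simp [breg]
  ring

lemma IsSubgradient.breg_nonneg (hxs : IsSubgradient F x xs) (y : X) : 0 ≤ breg F xs y x := by
  simp only [breg]
  linarith [hxs y]

lemma IsSubgradient.fconj_eq (hxs : IsSubgradient F x xs) :
    fconj F xs = ((xs x - F x : ℝ) : EReal) := by
  refine le_antisymm (iSup_le fun z => EReal.coe_le_coe_iff.2 ?_) (le_iSup_of_le x le_rfl)
  linarith [hxs z, map_sub xs z x]

lemma IsSubgradient.ofReal_le_deltaF_iff (hxs : IsSubgradient F x xs) {a τ : ℝ} :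
    ENNReal.ofReal a ≤ deltaF F x xs τ ↔ ∀ v : X, ‖v‖ = τ → a ≤ breg F xs (x + v) x := by
  simp only [deltaF, le_iInf₂_iff, abs_of_nonneg (hxs.breg_nonneg _),
    ENNReal.ofReal_le_ofReal_iff (hxs.breg_nonneg _)]
  exact ⟨fun h v hv => h _ (by simpa using hv), fun h y hy => by simpa using h (y - x) hy⟩

lemma IsSubgradient.rhoFconj_le_coe_iff (hxs : IsSubgradient F x xs) {τ b : ℝ} :
    rhoFconj F xs x τ ≤ (b : EReal) ↔
      ∀ φ : X →L[ℝ] ℝ, ‖φ‖ = τ → ∀ v : X, φ v - breg F xs (x + v) x ≤ b := by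
  have key : ∀ ψ : X →L[ℝ] ℝ, fconj F ψ - fconj F xs - (((ψ - xs) x : ℝ) : EReal) ≤ b ↔
      ∀ v : X, (ψ - xs) v - breg F xs (x + v) x ≤ b := by
    intro ψ
    have hsub : ∀ (a : EReal) (c d : ℝ), a - c ≤ d ↔ a ≤ ((d + c : ℝ) : EReal) := fun a c d => by
      rw [EReal.sub_le_iff_le_add (.inl (EReal.coe_ne_bot c)) (.inl (EReal.coe_ne_top c)),
        EReal.coe_add]
    rw [hxs.fconj_eq, hsub, hsub, fconj, iSup_le_iff]
    simp only [EReal.coe_le_coe_iff]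
    refine ⟨fun h v => ?_, fun h z => ?_⟩
    · have := h (x + v)
      simp only [breg, sub_apply, map_add, add_sub_cancel_left] at this ⊢
      linarith
    · have := h (z - x)
      simp only [breg, sub_apply, map_sub, add_sub_cancel] at this ⊢
      linarith
  simp only [rhoFconj, iSup₂_le_iff, key]
  exact ⟨fun h φ hφ => by simpa using h (xs + φ) (by simpa using hφ), fun h ψ hψ => h _ hψ⟩

lemma IsSubgradient.exists_ofReal_rpow_le_deltaF_iff (hxs : IsSubgradient F x xs) {p : ℝ} :
    (∃ K τbar : ℝ, 0 < K ∧ 0 < τbar ∧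
        ∀ τ : ℝ, 0 < τ → τ ≤ τbar → ENNReal.ofReal (K * τ ^ p) ≤ deltaF F x xs τ) ↔
      GrowsAtLeastRpow (fun v => breg F xs (x + v) x) p := by
  simp only [hxs.ofReal_le_deltaF_iff]
  refine exists₂_congr fun K τbar => and_congr_right' <| and_congr_right' ?_
  exact ⟨fun h v hv0 hv => h _ hv0 hv v rfl, fun h τ hτ0 hτ v hv => by subst hv; exact h v hτ0 hτ⟩

lemma IsSubgradient.exists_rhoFconj_le_rpow_iff (hxs : IsSubgradient F x xs) {q : ℝ} :
    (∃ K' τbar' : ℝ, 0 < K' ∧ 0 < τbar' ∧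
        ∀ τ : ℝ, 0 < τ → τ ≤ τbar' → rhoFconj F xs x τ ≤ ((K' * τ ^ q : ℝ) : EReal)) ↔
      ConjGrowsAtMostRpow (fun v => breg F xs (x + v) x) q := by
  simp only [hxs.rhoFconj_le_coe_iff]
  refine exists₂_congr fun K' τbar' => and_congr_right' <| and_congr_right' ?_
  exact ⟨fun h φ hφ0 hφ => h _ hφ0 hφ φ rfl, fun h τ hτ0 hτ φ hφ => by subst hφ; exact h φ hτ0 hτ⟩

end Subgradient

theorem stmt9_general (X : Type*) [NormedAddCommGroup X] [NormedSpace ℝ X]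
    (F : X → ℝ) (hF : ConvexOn ℝ Set.univ F)
    (x : X) (xs : X →L[ℝ] ℝ) (hxs : IsSubgradient F x xs)
    (p p' : ℝ) (hp : 1 < p) (hpp' : 1 / p + 1 / p' = 1) :
    (∃ K τbar : ℝ, 0 < K ∧ 0 < τbar ∧
        ∀ τ : ℝ, 0 < τ → τ ≤ τbar → ENNReal.ofReal (K * τ ^ p) ≤ deltaF F x xs τ) ↔
    (∃ K' τbar' : ℝ, 0 < K' ∧ 0 < τbar' ∧
        ∀ τ : ℝ, 0 < τ → τ ≤ τbar' → rhoFconj F xs x τ ≤ ((K' * τ ^ p' : ℝ) : EReal)) := by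
  have hpq : p.HolderConjugate p' :=
    Real.holderConjugate_iff.2 ⟨hp, by simpa only [one_div] using hpp'⟩
  rw [hxs.exists_ofReal_rpow_le_deltaF_iff, hxs.exists_rhoFconj_le_rpow_iff]
  exact (hF.breg_add_left x xs).growsAtLeastRpow_iff_conjGrowsAtMostRpow (by simp [breg]) hpq

/-- for convex `F`, `x* ∈ ∂F(x)`, and `p > 1` with `1/p + 1/p' = 1`:
`F` is `p`-convex at `x` w.r.t. `x*` iff `F*` is `p'`-smooth at `x*` w.r.t. `x`. -/
theorem stmt9 (X : Type*) [NormedAddCommGroup X] [NormedSpace ℝ X] [CompleteSpace X]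
    (hdim : 2 ≤ Module.rank ℝ X)
    (F : X → ℝ) (hF : ConvexOn ℝ Set.univ F)
    (x : X) (xs : X →L[ℝ] ℝ) (hxs : IsSubgradient F x xs)
    (p p' : ℝ) (hp : 1 < p) (hpp' : 1 / p + 1 / p' = 1) :
    (∃ K τbar : ℝ, 0 < K ∧ 0 < τbar ∧
        ∀ τ : ℝ, 0 < τ → τ ≤ τbar → ENNReal.ofReal (K * τ ^ p) ≤ deltaF F x xs τ) ↔
    (∃ K' τbar' : ℝ, 0 < K' ∧ 0 < τbar' ∧
        ∀ τ : ℝ, 0 < τ → τ ≤ τbar' → rhoFconj F xs x τ ≤ ((K' * τ ^ p' : ℝ) : EReal)) :=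
  stmt9_general X F hF x xs hxs p p' hp hpp'
end

section
/- Let X be a real Banach space with dim X ≥ 2, p > 1, F(x) = (1/p)‖x‖^p, and let j_p : X → X* be a selection of the duality mapping. For every τ̄ > 0 there exists a constant C > 0 such that for all x ∈ S_X and all 0 < τ ≤ τ̄: ρ_{F,x}^{j_p(x)}(τ) ≤ C·ρ_X(τ). -/
open scoped ENNReal

/-!
Write `N = ‖y‖` for a point `y` at distance `τ` from the unit vector `x`. Since `⟨j_p(x), x⟩ = 1`,
the linearization error splits as `((N ^ p - 1) / p - (N - 1)) + (N - ⟨j_p(x), y⟩)`, a sum of two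
nonnegative terms. The first is a scalar Bregman divergence of `t ↦ t ^ p / p` at `1`, hence
`≤ L (N - 1) ^ 2 ≤ L τ ^ 2`. The second is `≤ 2 ρ_X(τ)`: test `ρ_X` at `x` and `(y - x) / τ`,
which gives `‖y‖ + ‖2x - y‖`, and bound `‖2x - y‖ ≥ ⟨j_p(x), 2x - y⟩ = 2 - ⟨j_p(x), y⟩`.

It remains to show `τ ^ 2 ≲ ρ_X(τ)` for bounded `τ`, which is where `dim X ≥ 2` enters. Embed a
plane as an injective real-linear `T : ℂ → X` and rescale a minimizer of `‖T ·‖` on the unit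
circle to `z₀` with `‖T z₀‖ = 1` and `|z| ≤ |z₀| ‖T z‖` for all `z`. Then `x = T z₀`, `y = T (i z₀)` satisfy
`‖x + t y‖ ≥ |1 + i t| = √(1 + t ^ 2)`, whence `ρ_X(τ) ≥ √(1 + μ τ ^ 2) - 1`.
-/

section Scalar

variable {p q t B : ℝ}

lemma rpow_sub_one_le_mul_rpow_sub_one_mul_sub_one (hp : 1 ≤ p) (ht : 0 ≤ t) :
    t ^ p - 1 ≤ p * t ^ (p - 1) * (t - 1) := by
  have hp0 : 0 < p := by linarith
  have hamgm := Real.geom_mean_le_arith_mean2_weighted (w₁ := 1 / p) (w₂ := (p - 1) / p)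
    (p₁ := 1) (p₂ := t ^ p) (by positivity) (div_nonneg (by linarith) hp0.le) zero_le_one
    (by positivity) (by field_simp; ring)
  have hpow : (t ^ p) ^ ((p - 1) / p) = t ^ (p - 1) := by
    rw [← Real.rpow_mul ht, mul_div_cancel₀ _ hp0.ne']
  have hsplit : t ^ p = t ^ (p - 1) * t := by
    conv_lhs => rw [← sub_add_cancel p 1, Real.rpow_add' ht (by linarith), Real.rpow_one]
  rw [Real.one_rpow, one_mul, hpow, mul_one] at hamgm
  rw [hsplit] at hamgm ⊢
  field_simp at hamgm
  nlinarith

lemma sub_one_le_rpow_sub_one_div (hp : 1 ≤ p) (ht : 0 ≤ t) : t - 1 ≤ (t ^ p - 1) / p := by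
  have := one_add_mul_self_le_rpow_one_add (s := t - 1) (by linarith) hp
  rw [add_sub_cancel] at this
  rw [le_div_iff₀ (by linarith)]
  linarith

lemma abs_rpow_sub_one_le_abs_sub_one (hq0 : 0 ≤ q) (hq1 : q ≤ 1) (ht : 0 ≤ t) :
    |t ^ q - 1| ≤ |t - 1| := by
  rcases le_total 1 t with h1 | h1
  · have : t ^ q ≤ t := by
      simpa using Real.rpow_le_rpow_of_exponent_le h1 hq1
    rw [abs_of_nonneg (by linarith [Real.one_le_rpow h1 hq0]), abs_of_nonneg (by linarith)]
    linarith
  · have : t ≤ t ^ q := Real.self_le_rpow_of_le_one ht h1 hq1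
    rw [abs_of_nonpos (by linarith [Real.rpow_le_one ht h1 hq0]), abs_of_nonpos (by linarith)]
    linarith

lemma abs_rpow_sub_one_le_mul_abs_sub_one (hq : 1 ≤ q) (hB : 1 ≤ B) (ht : 0 ≤ t)
    (htB : t ≤ B) : |t ^ q - 1| ≤ q * B ^ (q - 1) * |t - 1| := by
  have hBq : 1 ≤ B ^ (q - 1) := Real.one_le_rpow hB (by linarith)
  rcases le_total 1 t with h1 | h1
  · have htB' : t ^ (q - 1) ≤ B ^ (q - 1) := Real.rpow_le_rpow ht htB (by linarith)
    have := rpow_sub_one_le_mul_rpow_sub_one_mul_sub_one hq ht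
    have : q * t ^ (q - 1) * (t - 1) ≤ q * B ^ (q - 1) * (t - 1) := by gcongr
    rw [abs_of_nonneg (by linarith [Real.one_le_rpow h1 (by linarith : (0:ℝ) ≤ q)]),
      abs_of_nonneg (by linarith)]
    linarith
  · have := one_add_mul_self_le_rpow_one_add (s := t - 1) (by linarith) hq
    rw [add_sub_cancel] at this
    have : q * (1 - t) ≤ q * B ^ (q - 1) * (1 - t) := by
      rw [mul_assoc]; gcongr; nlinarith
    rw [abs_of_nonpos (by linarith [Real.rpow_le_one ht h1 (by linarith : (0:ℝ) ≤ q)]),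
      abs_of_nonpos (by linarith)]
    linarith

lemma exists_rpow_sub_one_div_sub_le_mul_sq (hp : 1 ≤ p) (hB : 1 ≤ B) :
    ∃ L, 0 ≤ L ∧ ∀ t, 0 ≤ t → t ≤ B → (t ^ p - 1) / p - (t - 1) ≤ L * (t - 1) ^ 2 := by
  obtain ⟨L, hL, hLip⟩ : ∃ L, 0 ≤ L ∧ ∀ t, 0 ≤ t → t ≤ B → |t ^ (p - 1) - 1| ≤ L * |t - 1| := by
    rcases le_total (p - 1) 1 with hp1 | hp1
    · exact ⟨1, zero_le_one, fun t ht _ => by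
        simpa using abs_rpow_sub_one_le_abs_sub_one (by linarith) hp1 ht⟩
    · exact ⟨_, by positivity, fun t ht htB => abs_rpow_sub_one_le_mul_abs_sub_one hp1 hB ht htB⟩
  refine ⟨L, hL, fun t ht htB => ?_⟩
  have htangent : (t ^ p - 1) / p ≤ t ^ (p - 1) * (t - 1) := by
    rw [div_le_iff₀ (by linarith)]
    linarith [rpow_sub_one_le_mul_rpow_sub_one_mul_sub_one hp ht]
  calc (t ^ p - 1) / p - (t - 1) ≤ (t ^ (p - 1) - 1) * (t - 1) := by linarith
    _ ≤ |t ^ (p - 1) - 1| * |t - 1| := by rw [← abs_mul]; exact le_abs_self _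
    _ ≤ L * |t - 1| * |t - 1| := by gcongr; exact hLip t ht htB
    _ = L * (t - 1) ^ 2 := by rw [mul_assoc, ← sq, sq_abs]

end Scalar

lemma LinearMap.exists_norm_apply_eq_one_forall_norm_le {E X : Type*} [NormedAddCommGroup E]
    [NormedSpace ℝ E] [FiniteDimensional ℝ E] [Nontrivial E] [NormedAddCommGroup X]
    [NormedSpace ℝ X] (T : E →ₗ[ℝ] X) (hT : Function.Injective T) :
    ∃ z₀, ‖T z₀‖ = 1 ∧ ∀ z, ‖z‖ ≤ ‖z₀‖ * ‖T z‖ := by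
  obtain ⟨u, hu, hmin⟩ := (isCompact_sphere (0 : E) 1).exists_isMinOn
    (NormedSpace.sphere_nonempty.mpr zero_le_one) T.continuous_of_finiteDimensional.norm.continuousOn
  rw [mem_sphere_zero_iff_norm] at hu
  have hm : 0 < ‖T u‖ := norm_pos_iff.mpr fun h =>
    (norm_ne_zero_iff.mp (hu ▸ one_ne_zero)) (hT (h.trans T.map_zero.symm))
  refine ⟨‖T u‖⁻¹ • u, ?_, fun z => ?_⟩
  · rw [map_smul, norm_smul, norm_inv, norm_norm, inv_mul_cancel₀ hm.ne']
  rcases eq_or_ne z 0 with rfl | hz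
  · simp
  have hz' : 0 < ‖z‖ := norm_pos_iff.mpr hz
  have hmz : ‖T u‖ ≤ ‖T (‖z‖⁻¹ • z)‖ := hmin (by
    rw [mem_sphere_zero_iff_norm, norm_smul, norm_inv, norm_norm, inv_mul_cancel₀ hz'.ne'])
  rw [map_smul, norm_smul, norm_inv, norm_norm, le_inv_mul_iff₀ hz'] at hmz
  rw [norm_smul, hu, mul_one, norm_inv, norm_norm, inv_mul_eq_div, le_div_iff₀ hm]
  linarith

section RhoSpace

variable {X : Type*} [NormedAddCommGroup X] [NormedSpace ℝ X]

lemma exists_sqrt_one_add_sq_le_norm_add_smul (hdim : 2 ≤ Module.rank ℝ X) :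
    ∃ x y : X, ‖x‖ = 1 ∧ y ≠ 0 ∧ ∀ t : ℝ, √(1 + t ^ 2) ≤ ‖x + t • y‖ := by
  have hrank : 1 < Module.rank ℝ X := lt_of_lt_of_le (by norm_num) hdim
  have : Nontrivial X := rank_pos_iff_nontrivial.mp (zero_lt_one.trans hrank)
  obtain ⟨e₁, he₁⟩ := exists_ne (0 : X)
  obtain ⟨e₂, hind⟩ := exists_linearIndependent_pair_of_one_lt_rank hrank he₁
  let T : ℂ →ₗ[ℝ] X := Complex.reLm.smulRight e₁ + Complex.imLm.smulRight e₂
  have hT : Function.Injective T := (injective_iff_map_eq_zero T).mpr fun z hz => by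
    obtain ⟨hre, him⟩ := LinearIndependent.pair_iff.mp hind _ _ hz
    exact Complex.ext hre him
  obtain ⟨z₀, hz₀, hle⟩ := T.exists_norm_apply_eq_one_forall_norm_le hT
  have hz₀pos : 0 < ‖z₀‖ := norm_pos_iff.mpr fun h => by simp [h] at hz₀
  refine ⟨T z₀, T (Complex.I * z₀), hz₀, fun h => ?_, fun t => ?_⟩
  · rw [← T.map_zero] at h
    exact norm_pos_iff.mp hz₀pos (by simpa using hT h)
  have hrot : T z₀ + t • T (Complex.I * z₀) = T (z₀ * (1 + t * Complex.I)) := by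
    rw [← map_smul, ← map_add, Complex.real_smul]; ring_nf
  have := hle (z₀ * (1 + t * Complex.I))
  rw [norm_mul, ← Complex.ofReal_one, Complex.norm_add_mul_I, one_pow] at this
  rw [hrot]
  exact le_of_mul_le_mul_left this hz₀pos

lemma ContinuousLinearMap.apply_le_norm_of_opNorm_le_one {φ : X →L[ℝ] ℝ} (hφ : ‖φ‖ ≤ 1)
    (y : X) : φ y ≤ ‖y‖ :=
  (le_abs_self _).trans ((φ.le_of_opNorm_le hφ y).trans_eq (one_mul _))

lemma le_rhoSpace {x y : X} (hx : ‖x‖ = 1) (hy : ‖y‖ = 1) (τ : ℝ) :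
    (‖x + τ • y‖ + ‖x - τ • y‖) / 2 - 1 ≤ rhoSpace X τ := by
  refine le_csSup ⟨|τ|, ?_⟩ ⟨x, y, hx, hy, rfl⟩
  rintro _ ⟨x, y, hx, hy, rfl⟩
  have hτy : ‖τ • y‖ = |τ| := by rw [norm_smul, hy, Real.norm_eq_abs, mul_one]
  linarith [norm_add_le x (τ • y), norm_sub_le x (τ • y)]

lemma norm_sub_apply_le_two_mul_rhoSpace {x y : X} {φ : X →L[ℝ] ℝ} {τ : ℝ} (hx : ‖x‖ = 1)
    (hφ : ‖φ‖ ≤ 1) (hφx : φ x = 1) (hτ : 0 < τ) (hy : ‖y - x‖ = τ) :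
    ‖y‖ - φ y ≤ 2 * rhoSpace X τ := by
  set u := τ⁻¹ • (y - x)
  have hu : ‖u‖ = 1 := by
    rw [norm_smul, norm_inv, Real.norm_of_nonneg hτ.le, hy, inv_mul_cancel₀ hτ.ne']
  have hτu : τ • u = y - x := by rw [smul_smul, mul_inv_cancel₀ hτ.ne', one_smul]
  have hρ := le_rhoSpace hx hu τ
  rw [hτu, add_sub_cancel] at hρ
  have hφ' := φ.apply_le_norm_of_opNorm_le_one hφ (x - (y - x))
  rw [map_sub, map_sub, hφx] at hφ'
  linarith

lemma exists_mul_sq_le_rhoSpace (hdim : 2 ≤ Module.rank ℝ X) (τbar : ℝ) :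
    ∃ c, 0 < c ∧ ∀ τ, 0 ≤ τ → τ ≤ τbar → c * τ ^ 2 ≤ rhoSpace X τ := by
  obtain ⟨x, y, hx, hy, hsqrt⟩ := exists_sqrt_one_add_sq_le_norm_add_smul hdim
  set a := ‖y‖⁻¹
  have ha : 0 < a := inv_pos.mpr (norm_pos_iff.mpr hy)
  have hyn : ‖a • y‖ = 1 := by
    rw [norm_smul, Real.norm_of_nonneg ha.le, inv_mul_cancel₀ (norm_ne_zero_iff.mpr hy)]
  refine ⟨a ^ 2 / (2 + (τbar * a) ^ 2), by positivity, fun τ hτ hτbar => ?_⟩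
  set s := (τ * a) ^ 2
  have hs : s ≤ (τbar * a) ^ 2 := pow_le_pow_left₀ (by positivity) (by gcongr) 2
  -- `(1 + s / (2 + s)) ^ 2 ≤ 1 + s` because `4 (1 + s) ≤ (2 + s) ^ 2`.
  have hsqrt_lower : 1 + s / (2 + (τbar * a) ^ 2) ≤ √(1 + s) := by
    have hs0 : 0 ≤ s := sq_nonneg _
    calc 1 + s / (2 + (τbar * a) ^ 2) ≤ 1 + s / (2 + s) := by gcongr
      _ ≤ √(1 + s) := by
        rw [Real.le_sqrt (by positivity) (by positivity),
          show 1 + s / (2 + s) = 2 * (1 + s) / (2 + s) by field_simp; ring, div_pow,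
          div_le_iff₀ (by positivity)]
        nlinarith [sq_nonneg s]
  have hplus := hsqrt (τ * a)
  have hminus := hsqrt (-(τ * a))
  rw [mul_smul] at hplus
  rw [neg_sq, neg_smul, mul_smul, ← sub_eq_add_neg] at hminus
  have := le_rhoSpace hx hyn τ
  calc a ^ 2 / (2 + (τbar * a) ^ 2) * τ ^ 2 = s / (2 + (τbar * a) ^ 2) := by ring
    _ ≤ rhoSpace X τ := by linarith

lemma breg_one_div_mul_norm_rpow {p : ℝ} {x : X} {φ : X →L[ℝ] ℝ} (hx : ‖x‖ = 1)
    (hφx : φ x = 1) (y : X) :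
    breg (fun z : X => 1 / p * ‖z‖ ^ p) φ y x =
      ((‖y‖ ^ p - 1) / p - (‖y‖ - 1)) + (‖y‖ - φ y) := by
  rw [breg, map_sub, hφx, hx, Real.one_rpow]
  ring

end RhoSpace

theorem stmt10_general (X : Type*) [NormedAddCommGroup X] [NormedSpace ℝ X]
    (hdim : 2 ≤ Module.rank ℝ X)
    (p : ℝ) (hp : 1 < p)
    (jp : X → X →L[ℝ] ℝ) (hjp : IsDualitySelection p jp) :
    ∀ τbar : ℝ, 0 < τbar → ∃ C : ℝ, 0 < C ∧
      ∀ x : X, ‖x‖ = 1 → ∀ τ : ℝ, 0 < τ → τ ≤ τbar →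
        rhoF (fun z : X => (1 / p) * ‖z‖ ^ p) x (jp x) τ ≤
          ENNReal.ofReal (C * rhoSpace X τ) := by
  intro τbar hτbar
  obtain ⟨c, hc, hcρ⟩ := exists_mul_sq_le_rhoSpace hdim τbar
  obtain ⟨L, hL, hLψ⟩ := exists_rpow_sub_one_div_sub_le_mul_sq hp.le (by linarith : 1 ≤ 1 + τbar)
  refine ⟨L / c + 2, by positivity, fun x hx τ hτ hττbar => iSup₂_le fun y hy => ?_⟩
  have hjnorm : ‖jp x‖ = 1 := by rw [(hjp x).2, hx, Real.one_rpow]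
  have hjx : jp x x = 1 := by rw [(hjp x).1, hjnorm, hx, one_mul]
  have hdist : |‖y‖ - 1| ≤ τ := hx ▸ hy ▸ abs_norm_sub_norm_le y x
  have hψ := hLψ ‖y‖ (norm_nonneg y) (by linarith [(abs_le.mp hdist).2])
  have hsq : (‖y‖ - 1) ^ 2 ≤ τ ^ 2 := by rw [← sq_abs]; gcongr
  have hlin := norm_sub_apply_le_two_mul_rhoSpace hx hjnorm.le hjx hτ hy
  have hjy := (jp x).apply_le_norm_of_opNorm_le_one hjnorm.le y
  have hcτ := hcρ τ hτ.le hττbar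
  have hψ₀ := sub_one_le_rpow_sub_one_div hp.le (norm_nonneg y)
  rw [breg_one_div_mul_norm_rpow hx hjx, abs_of_nonneg (by linarith)]
  refine ENNReal.ofReal_le_ofReal ?_
  calc (‖y‖ ^ p - 1) / p - (‖y‖ - 1) + (‖y‖ - jp x y) ≤ L * τ ^ 2 + 2 * rhoSpace X τ := by
        gcongr; exact hψ.trans (by gcongr)
    _ = L / c * (c * τ ^ 2) + 2 * rhoSpace X τ := by field_simp
    _ ≤ L / c * rhoSpace X τ + 2 * rhoSpace X τ := by gcongr
    _ = (L / c + 2) * rhoSpace X τ := by ring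

/-- for `F = (1/p)‖·‖^p` and a duality selection `j_p`, for every `τ̄ > 0`
there is `C > 0` with `ρ_{F,x}^{j_p(x)}(τ) ≤ C·ρ_X(τ)` for all `x ∈ S_X`, `0 < τ ≤ τ̄`. -/
theorem stmt10 (X : Type*) [NormedAddCommGroup X] [NormedSpace ℝ X] [CompleteSpace X]
    (hdim : 2 ≤ Module.rank ℝ X)
    (p : ℝ) (hp : 1 < p)
    (jp : X → X →L[ℝ] ℝ) (hjp : IsDualitySelection p jp) :
    ∀ τbar : ℝ, 0 < τbar → ∃ C : ℝ, 0 < C ∧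
      ∀ x : X, ‖x‖ = 1 → ∀ τ : ℝ, 0 < τ → τ ≤ τbar →
        rhoF (fun z : X => (1 / p) * ‖z‖ ^ p) x (jp x) τ ≤
          ENNReal.ofReal (C * rhoSpace X τ) :=
  stmt10_general X hdim p hp jp hjp
end

section
/- Let X be a real Banach space with dim X ≥ 2, p > 1, F(x) = (1/p)‖x‖^p, and let j_p : X → X* be a selection of the duality mapping. Suppose there exist τ̄ > 0 and a nondecreasing function φ : [0,∞) → [0,∞) with φ(τ) > 0 for all τ > 0 such that δ_{F,x}^{j_p(x)}(τ) ≥ φ(τ) for all x ∈ S_X and all 0 < τ ≤ τ̄. Then X is uniformly convex, i.e. δ_X(ε) > 0 for every ε ∈ (0,2]. -/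
open scoped ENNReal

/-! At a unit vector `x` the Bregman error of `F = ‖·‖ᵖ/p` with respect to `j_p(x)` is
nonnegative (Young's inequality makes `j_p(x)` a subgradient), and in the sum of the errors at
`x + w` and `x - w` the linear parts cancel, leaving `F(x + w) + F(x - w) - 2F(x)`.
Given unit vectors `u`, `v` with `‖u - v‖ = ε`, take `x = (u + v)/‖u + v‖` and `w` a multiple of
`u - v` of norm `τ ≤ ε/2`: both `x ± w` are combinations of `u` and `v` with nonnegative
coefficients summing to `2/‖u + v‖`, so `(2/‖u + v‖)ᵖ ≥ 1 + p φ(τ)`, which keeps `‖u + v‖`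
uniformly below `2`. -/

section

variable {X : Type*} [NormedAddCommGroup X] [NormedSpace ℝ X]

lemma breg_nonneg_of_isSubgradient {F : X → ℝ} {x : X} {ℓ : X →L[ℝ] ℝ}
    (h : IsSubgradient F x ℓ) (y : X) : 0 ≤ breg F ℓ y x := by
  unfold breg
  linarith [h y]

lemma le_breg_of_le_deltaF {F : X → ℝ} {x : X} {ℓ : X →L[ℝ] ℝ} {a τ : ℝ}
    (hsub : IsSubgradient F x ℓ) (ha : ENNReal.ofReal a ≤ deltaF F x ℓ τ) {y : X}
    (hy : ‖y - x‖ = τ) : a ≤ breg F ℓ y x := by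
  have h : ENNReal.ofReal a ≤ ENNReal.ofReal |breg F ℓ y x| := ha.trans (iInf₂_le y hy)
  rwa [ENNReal.ofReal_le_ofReal_iff (abs_nonneg _),
    abs_of_nonneg (breg_nonneg_of_isSubgradient hsub y)] at h

lemma breg_add_breg_sub (F : X → ℝ) (ℓ : X →L[ℝ] ℝ) (x w : X) :
    breg F ℓ (x + w) x + breg F ℓ (x - w) x = F (x + w) + F (x - w) - 2 * F x := by
  simp only [breg, add_sub_cancel_left, sub_sub_cancel_left, map_neg]
  ring

lemma isSubgradient_of_isDualitySelection {p : ℝ} (hp : 1 < p) {jp : X → X →L[ℝ] ℝ}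
    (hjp : IsDualitySelection p jp) (x : X) :
    IsSubgradient (fun z : X => (1 / p) * ‖z‖ ^ p) x (jp x) := by
  intro y
  obtain ⟨hjx, hnorm⟩ := hjp x
  have hpq := Real.HolderConjugate.conjExponent hp
  have hxx : jp x x = ‖x‖ ^ p := by
    rw [hjx, hnorm, ← Real.rpow_add_one' (norm_nonneg x) (by linarith), sub_add_cancel]
  have hq : (‖x‖ ^ (p - 1)) ^ p.conjExponent = ‖x‖ ^ p := by
    rw [← Real.rpow_mul (norm_nonneg x), Real.conjExponent, mul_div_cancel₀ _ (by linarith)]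
  have hjy : jp x y ≤ ‖y‖ * ‖x‖ ^ (p - 1) := by
    rw [mul_comm, ← hnorm]
    exact (le_abs_self _).trans ((jp x).le_opNorm y)
  have hyoung := Real.young_inequality_of_nonneg (norm_nonneg y)
    (Real.rpow_nonneg (norm_nonneg x) (p - 1)) hpq
  rw [hq] at hyoung
  have hinv : 1 / p.conjExponent = 1 - 1 / p := by
    have := hpq.inv_add_inv_eq_one
    rw [one_div, one_div]
    linarith
  simp only [map_sub, hxx]
  rw [div_eq_mul_one_div (‖x‖ ^ p), hinv, div_eq_mul_one_div (‖y‖ ^ p)] at hyoung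
  linarith

lemma norm_smul_add_add_smul_sub_le {u v : X} (hu : ‖u‖ = 1) (hv : ‖v‖ = 1) {a c : ℝ}
    (hc : |c| ≤ a) : ‖a • (u + v) + c • (u - v)‖ ≤ 2 * a := by
  obtain ⟨hca, hac⟩ := abs_le.1 hc
  have hsplit : a • (u + v) + c • (u - v) = (a + c) • u + (a - c) • v := by module
  calc ‖a • (u + v) + c • (u - v)‖ ≤ ‖(a + c) • u‖ + ‖(a - c) • v‖ := hsplit ▸ norm_add_le _ _
    _ = (a + c) + (a - c) := by
      rw [norm_smul, norm_smul, hu, hv, Real.norm_of_nonneg (by linarith),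
        Real.norm_of_nonneg (by linarith), mul_one, mul_one]
    _ = 2 * a := by ring

lemma one_add_mul_le_rpow_of_le_breg {p : ℝ} (hp : 0 < p) {ℓ : X →L[ℝ] ℝ} {x w : X}
    (hx : ‖x‖ = 1) {m R : ℝ}
    (hm_add : m ≤ breg (fun z : X => (1 / p) * ‖z‖ ^ p) ℓ (x + w) x)
    (hm_sub : m ≤ breg (fun z : X => (1 / p) * ‖z‖ ^ p) ℓ (x - w) x)
    (hR_add : ‖x + w‖ ≤ R) (hR_sub : ‖x - w‖ ≤ R) :
    1 + p * m ≤ R ^ p := by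
  have hsum := breg_add_breg_sub (fun z : X => (1 / p) * ‖z‖ ^ p) ℓ x w
  simp only [hx, Real.one_rpow, mul_one] at hsum
  have h_add := Real.rpow_le_rpow (norm_nonneg _) hR_add hp.le
  have h_sub := Real.rpow_le_rpow (norm_nonneg _) hR_sub hp.le
  have h2m : 2 * m ≤ (1 / p) * (2 * R ^ p) - 2 * (1 / p) := by
    have := mul_le_mul_of_nonneg_left (add_le_add h_add h_sub) (one_div_nonneg.2 hp.le)
    linarith
  have hscale : p * ((1 / p) * (2 * R ^ p) - 2 * (1 / p)) = 2 * R ^ p - 2 := by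
    field_simp
  linarith [mul_le_mul_of_nonneg_left h2m hp.le]

lemma norm_add_div_two_le_of_le_breg {p τ m : ℝ} (hp : 0 < p) (hτ : 0 < τ) (hm : 0 ≤ m)
    {ℓ : X → X →L[ℝ] ℝ}
    (hbreg : ∀ x : X, ‖x‖ = 1 → ∀ w : X, ‖w‖ = τ →
      m ≤ breg (fun z : X => (1 / p) * ‖z‖ ^ p) (ℓ x) (x + w) x)
    {u v : X} (hu : ‖u‖ = 1) (hv : ‖v‖ = 1) (huv : 2 * τ ≤ ‖u - v‖) :
    ‖u + v‖ / 2 ≤ (1 + p * m)⁻¹ ^ p⁻¹ := by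
  rcases (norm_nonneg (u + v)).eq_or_lt with hs0 | hs0
  · rw [← hs0, zero_div]
    positivity
  set s := ‖u + v‖ with hs
  have hs2 : s ≤ 2 := by linarith [norm_add_le u v]
  have huv0 : 0 < ‖u - v‖ := by linarith
  set c := τ / ‖u - v‖
  have hc0 : 0 ≤ c := by positivity
  have hcs : c ≤ s⁻¹ := by
    rw [div_le_iff₀ huv0]
    nlinarith [inv_mul_cancel₀ hs0.ne']
  set x := s⁻¹ • (u + v)
  set w := c • (u - v)
  have hx : ‖x‖ = 1 := by
    rw [norm_smul, Real.norm_of_nonneg (by positivity), ← hs, inv_mul_cancel₀ hs0.ne']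
  have hw : ‖w‖ = τ := by
    rw [norm_smul, Real.norm_of_nonneg hc0, div_mul_cancel₀ _ huv0.ne']
  have hR_add : ‖x + w‖ ≤ 2 * s⁻¹ :=
    norm_smul_add_add_smul_sub_le hu hv (by rwa [abs_of_nonneg hc0])
  have hR_sub : ‖x - w‖ ≤ 2 * s⁻¹ := by
    rw [sub_eq_add_neg, ← neg_smul]
    exact norm_smul_add_add_smul_sub_le hu hv (by rwa [abs_neg, abs_of_nonneg hc0])
  have hm_sub := hbreg x hx (-w) (by rw [norm_neg, hw])
  rw [← sub_eq_add_neg] at hm_sub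
  have hpow := one_add_mul_le_rpow_of_le_breg hp hx (hbreg x hx w hw) hm_sub hR_add hR_sub
  rw [Real.le_rpow_inv_iff_of_pos (by positivity) (by positivity) hp,
    le_inv_comm₀ (by positivity) (by positivity), ← Real.inv_rpow (by positivity)]
  simpa [div_eq_mul_inv, mul_comm] using hpow

lemma exists_norm_eq_one_norm_sub_eq (hdim : 2 ≤ Module.rank ℝ X) {ε : ℝ} (hε : 0 ≤ ε)
    (hε2 : ε ≤ 2) :
    ∃ u v : X, ‖u‖ = 1 ∧ ‖v‖ = 1 ∧ ‖u - v‖ = ε := by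
  have hconn := isConnected_sphere (lt_of_lt_of_le (by norm_num) hdim) (0 : X) zero_le_one
  obtain ⟨u, hu⟩ := hconn.nonempty
  rw [mem_sphere_zero_iff_norm] at hu
  have hneg : -u ∈ Metric.sphere (0 : X) 1 := by rwa [mem_sphere_zero_iff_norm, norm_neg]
  have hu_neg : ‖u - -u‖ = 2 := by
    rw [sub_neg_eq_add, ← two_smul ℝ u, norm_smul, hu, Real.norm_two, mul_one]
  obtain ⟨v, hv, huv⟩ := hconn.isPreconnected.intermediate_value
    (mem_sphere_zero_iff_norm.2 hu) hneg (continuous_const.sub continuous_id).norm.continuousOn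
    (show ε ∈ Set.Icc ‖u - u‖ ‖u - -u‖ by rw [sub_self, norm_zero, hu_neg]; exact ⟨hε, hε2⟩)
  exact ⟨u, v, hu, mem_sphere_zero_iff_norm.1 hv, huv⟩

lemma le_deltaSpace (hdim : 2 ≤ Module.rank ℝ X) {ε d : ℝ} (hε : 0 ≤ ε) (hε2 : ε ≤ 2)
    (h : ∀ u v : X, ‖u‖ = 1 → ‖v‖ = 1 → ‖u - v‖ = ε → d ≤ 1 - ‖u + v‖ / 2) :
    d ≤ deltaSpace X ε := by
  obtain ⟨u, v, hu, hv, huv⟩ := exists_norm_eq_one_norm_sub_eq hdim hε hε2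
  refine le_csInf ⟨_, u, v, hu, hv, huv, rfl⟩ ?_
  rintro r ⟨y, z, hy, hz, hyz, rfl⟩
  exact h y z hy hz hyz

end

theorem stmt13_general (X : Type*) [NormedAddCommGroup X] [NormedSpace ℝ X]
    (hdim : 2 ≤ Module.rank ℝ X)
    (p : ℝ) (hp : 1 < p)
    (jp : X → X →L[ℝ] ℝ) (hjp : IsDualitySelection p jp)
    (τbar : ℝ) (hτbar : 0 < τbar)
    (φ : ℝ → ℝ)
    (hφpos : ∀ τ : ℝ, 0 < τ → 0 < φ τ)
    (hbound : ∀ x : X, ‖x‖ = 1 → ∀ τ : ℝ, 0 < τ → τ ≤ τbar →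
      ENNReal.ofReal (φ τ) ≤ deltaF (fun z : X => (1 / p) * ‖z‖ ^ p) x (jp x) τ) :
    ∀ ε : ℝ, 0 < ε → ε ≤ 2 → 0 < deltaSpace X ε := by
  intro ε hε hε2
  set τ := min τbar (ε / 2)
  have hτ : 0 < τ := lt_min hτbar (by linarith)
  have hφτ := hφpos τ hτ
  have hbreg : ∀ x : X, ‖x‖ = 1 → ∀ w : X, ‖w‖ = τ →
      φ τ ≤ breg (fun z : X => (1 / p) * ‖z‖ ^ p) (jp x) (x + w) x :=
    fun x hx w hw => le_breg_of_le_deltaF (isSubgradient_of_isDualitySelection hp hjp x)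
      (hbound x hx τ hτ (min_le_left _ _)) (by rwa [add_sub_cancel_left])
  have hd : 0 < 1 - (1 + p * φ τ)⁻¹ ^ p⁻¹ := by
    have : (1 + p * φ τ)⁻¹ < 1 := inv_lt_one_of_one_lt₀ (by nlinarith)
    have := Real.rpow_lt_one (by positivity) this (by positivity : 0 < p⁻¹)
    linarith
  refine hd.trans_le (le_deltaSpace hdim hε.le hε2 fun u v hu hv huv => ?_)
  have := norm_add_div_two_le_of_le_breg (by linarith) hτ hφτ.le hbreg hu hv
    (by rw [huv]; linarith [min_le_right τbar (ε / 2)])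
  linarith

/-- for `F = (1/p)‖·‖^p`, if there are `τ̄ > 0` and a nondecreasing
`φ : [0,∞) → [0,∞)` with `φ(τ) > 0` for `τ > 0` such that `δ_{F,x}^{j_p(x)}(τ) ≥ φ(τ)`
for all `x ∈ S_X` and `0 < τ ≤ τ̄`, then `X` is uniformly convex. -/
theorem stmt13 (X : Type*) [NormedAddCommGroup X] [NormedSpace ℝ X] [CompleteSpace X]
    (hdim : 2 ≤ Module.rank ℝ X)
    (p : ℝ) (hp : 1 < p)
    (jp : X → X →L[ℝ] ℝ) (hjp : IsDualitySelection p jp)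
    (τbar : ℝ) (hτbar : 0 < τbar)
    (φ : ℝ → ℝ)
    (hφ0 : ∀ τ : ℝ, 0 ≤ τ → 0 ≤ φ τ)
    (hφmono : ∀ τ₁ τ₂ : ℝ, 0 ≤ τ₁ → τ₁ ≤ τ₂ → φ τ₁ ≤ φ τ₂)
    (hφpos : ∀ τ : ℝ, 0 < τ → 0 < φ τ)
    (hbound : ∀ x : X, ‖x‖ = 1 → ∀ τ : ℝ, 0 < τ → τ ≤ τbar →
      ENNReal.ofReal (φ τ) ≤ deltaF (fun z : X => (1 / p) * ‖z‖ ^ p) x (jp x) τ) :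
    ∀ ε : ℝ, 0 < ε → ε ≤ 2 → 0 < deltaSpace X ε :=
  stmt13_general X hdim p hp jp hjp τbar hτbar φ hφpos hbound
end

section
/- Let X be a real Banach space with dim X ≥ 2 that is q-smooth for some q ∈ (1,2], i.e. there exists K > 0 with ρ_X(τ) ≤ Kτ^q for all τ > 0. Let p > 1, F(x) = (1/p)‖x‖^p, and j_p : X → X* a selection of the duality mapping. If p = q, there exists C > 0 such that Δ_F^{j_p(x)}(y,x) ≤ C‖x−y‖^q for all x, y ∈ X. If p ≠ q, then for every τ̄ > 0 there exists C_τ̄ > 0 such that Δ_F^{j_p(x)}(y,x) ≤ C_τ̄ ‖x‖^{p−q}‖x−y‖^q for all x ≠ 0 and y ∈ X with ‖x−y‖ ≤ τ̄‖x‖. -/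
open scoped ENNReal

/-! Write `y = x + h`, `a = ‖x‖` and `B = ‖h‖ / a`. Testing the modulus of smoothness at the unit
vectors `x / a`, `h / ‖h‖` with `τ = B`, and bounding `‖x - h‖` from below by the norming
functional `jp x / a ^ (p - 1)`, gives `‖y‖ / a ≤ 1 + J + 2 K B ^ q` with `J = jp x h / a ^ p`
and `|J| ≤ B`. When `B` is small, a second-order bound for `(1 + u) ^ p` near `u = 0` turns this
into `‖y‖ ^ p ≤ a ^ p + p jp x h + C a ^ p B ^ q`, which is the claim. When `B` is bounded below
the crude estimate `Δ ≤ (1 + 1/p) (a + ‖h‖) ^ p` suffices: for `p = q` it is `O(‖h‖ ^ p)`, and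
for `B ≤ τ̄` it is `O(a ^ p) = O(a ^ (p - q) ‖h‖ ^ q)`. -/

lemma exists_one_add_rpow_le_quadratic {p : ℝ} (hp : 1 < p) :
    ∃ M : ℝ, 0 ≤ M ∧ ∀ u : ℝ, |u| ≤ 1 / 2 → (1 + u) ^ p ≤ 1 + p * u + M * u ^ 2 := by
  have hp1 : 0 < p - 1 := by linarith
  set M := 2 * p * (p - 1) * 2 ^ p
  refine ⟨M, by positivity, fun u hu => ?_⟩
  set D : Set ℝ := Set.Icc (-(1 / 2)) (1 / 2)
  set g : ℝ → ℝ := fun u => 1 + p * u + M * u ^ 2 - (1 + u) ^ p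
  set g' : ℝ → ℝ := fun u => p + M * (2 * u) - p * (1 + u) ^ (p - 1)
  have hshift (u : ℝ) : HasDerivAt (fun u : ℝ => 1 + u) 1 u := (hasDerivAt_id' u).const_add 1
  have hg (u : ℝ) : HasDerivAt g (g' u) u :=
    ((((hasDerivAt_id' u).const_mul p).const_add 1).add
      ((hasDerivAt_pow 2 u).const_mul M) |>.sub
      ((hshift u).rpow_const (Or.inr hp.le))).congr_deriv (by simp only [g']; ring)
  have hg' (u : ℝ) (hu : u ∈ interior D) :
      HasDerivAt g' (M * 2 - p * ((p - 1) * (1 + u) ^ (p - 2))) u := by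
    rw [interior_Icc] at hu
    exact (((hasDerivAt_id' u).const_mul 2 |>.const_mul M |>.const_add p).sub
      (((hshift u).rpow_const (Or.inl (by linarith [hu.1]))).const_mul p)).congr_deriv
      (by ring_nf)
  -- `M` is chosen so that `(1 + u) ^ (p - 2) = (1 + u) ^ p / (1 + u) ^ 2 ≤ 2 ^ p * 4` on `D` suffices
  have hg'' (u : ℝ) (hu : u ∈ interior D) :
      0 ≤ M * 2 - p * ((p - 1) * (1 + u) ^ (p - 2)) := by
    rw [interior_Icc] at hu
    have h0 : 0 < 1 + u := by linarith [hu.1]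
    have hpow : (1 + u) ^ p ≤ 2 ^ p := Real.rpow_le_rpow h0.le (by linarith [hu.2]) (by linarith)
    have hsq : 1 ≤ 4 * (1 + u) ^ 2 := by nlinarith [hu.1]
    have : (1 + u) ^ (p - 2) ≤ 4 * 2 ^ p := by
      rw [Real.rpow_sub h0, Real.rpow_two, div_le_iff₀ (by positivity)]
      nlinarith [Real.rpow_nonneg h0.le p]
    have : p * ((p - 1) * (1 + u) ^ (p - 2)) ≤ p * ((p - 1) * (4 * 2 ^ p)) := by gcongr
    linarith
  have hconv : ConvexOn ℝ D g :=
    convexOn_of_hasDerivWithinAt2_nonneg (convex_Icc _ _)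
      (fun u _ => (hg u).continuousAt.continuousWithinAt)
      (fun u _ => (hg u).hasDerivWithinAt) (fun u hu => (hg' u hu).hasDerivWithinAt) hg''
  have hmin : IsMinOn g D 0 := by
    refine hconv.isMinOn_of_rightDeriv_eq_zero (by rw [interior_Icc]; norm_num) ?_
    rw [(hg 0).hasDerivWithinAt.derivWithin (uniqueDiffWithinAt_Ioi 0)]
    simp [g']
  have := hmin (abs_le.1 hu)
  norm_num [g] at this
  linarith

lemma rpow_le_one_add_of_le_one_add {p q K M s J B : ℝ} (hp : 0 ≤ p) (hq1 : 1 ≤ q) (hq2 : q ≤ 2)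
    (hK : 0 ≤ K) (hM : 0 ≤ M)
    (htaylor : ∀ u : ℝ, |u| ≤ 1 / 2 → (1 + u) ^ p ≤ 1 + p * u + M * u ^ 2)
    (hs : 0 ≤ s) (hB : 0 ≤ B) (hBε : (2 + 4 * K) * B ≤ 1) (hJ : |J| ≤ B)
    (hsJ : s ≤ 1 + J + 2 * K * B ^ q) :
    s ^ p ≤ 1 + p * J + (2 * p * K + M * (1 + 2 * K) ^ 2) * B ^ q := by
  have hB1 : B ≤ 1 := by nlinarith
  have hBq : B ^ q ≤ B := Real.rpow_le_self_of_le_one hB hB1 hq1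
  have hB2 : B ^ 2 ≤ B ^ q := by
    rw [← Real.rpow_two]; exact Real.rpow_le_rpow_of_exponent_ge' hB hB1 (by linarith) hq2
  set u := J + 2 * K * B ^ q
  have hu : |u| ≤ (1 + 2 * K) * B := by
    have : |2 * K * B ^ q| ≤ 2 * K * B := by
      rw [abs_of_nonneg (by positivity)]; gcongr
    linarith [abs_add_le J (2 * K * B ^ q)]
  have hu2 : u ^ 2 ≤ (1 + 2 * K) ^ 2 * B ^ q := by
    calc u ^ 2 = |u| ^ 2 := (sq_abs u).symm
      _ ≤ ((1 + 2 * K) * B) ^ 2 := by gcongr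
      _ = (1 + 2 * K) ^ 2 * B ^ 2 := by ring
      _ ≤ (1 + 2 * K) ^ 2 * B ^ q := by gcongr
  calc s ^ p ≤ (1 + u) ^ p := Real.rpow_le_rpow hs (by linarith) hp
    _ ≤ 1 + p * u + M * u ^ 2 := htaylor u (by linarith)
    _ ≤ 1 + p * u + M * ((1 + 2 * K) ^ 2 * B ^ q) := by gcongr
    _ = _ := by ring

section NormedSpace

variable {X : Type*} [NormedAddCommGroup X] [NormedSpace ℝ X] {p q : ℝ} {jp : X → X →L[ℝ] ℝ}

lemma le_rhoSpace_s18 {u v : X} (hu : ‖u‖ = 1) (hv : ‖v‖ = 1) (τ : ℝ) :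
    (‖u + τ • v‖ + ‖u - τ • v‖) / 2 - 1 ≤ rhoSpace X τ := by
  refine le_csSup ⟨|τ|, ?_⟩ ⟨u, v, hu, hv, rfl⟩
  rintro _ ⟨z, w, hz, hw, rfl⟩
  have h₁ := norm_add_le z (τ • w)
  have h₂ := norm_sub_le z (τ • w)
  rw [norm_smul, hz, hw, Real.norm_eq_abs, mul_one] at h₁ h₂
  linarith

lemma norm_add_add_norm_sub_le {x h : X} (hx : x ≠ 0) (hh : h ≠ 0) :
    ‖x + h‖ + ‖x - h‖ ≤ 2 * ‖x‖ * (1 + rhoSpace X (‖h‖ / ‖x‖)) := by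
  have ha : 0 < ‖x‖ := norm_pos_iff.2 hx
  have hunit {z : X} (hz : z ≠ 0) : ‖‖z‖⁻¹ • z‖ = 1 := by
    simpa using norm_smul_inv_norm (𝕜 := ℝ) hz
  have key := le_rhoSpace_s18 (hunit hx) (hunit hh) (‖h‖ / ‖x‖)
  have hτ : (‖h‖ / ‖x‖) • (‖h‖⁻¹ : ℝ) • h = (‖x‖⁻¹ : ℝ) • h := by
    rw [smul_smul]; congr 1; field_simp [norm_ne_zero_iff.2 hh]
  rw [hτ, ← smul_add, ← smul_sub, norm_smul, norm_smul, norm_inv, norm_norm] at key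
  field_simp at key
  nlinarith

lemma norm_add_le_of_opNorm_le_one {f : X →L[ℝ] ℝ} (hf : ‖f‖ ≤ 1) {x h : X} (hfx : f x = ‖x‖)
    (hx : x ≠ 0) (hh : h ≠ 0) :
    ‖x + h‖ ≤ ‖x‖ + f h + 2 * ‖x‖ * rhoSpace X (‖h‖ / ‖x‖) := by
  have hsum := norm_add_add_norm_sub_le hx hh
  have hsub : f (x - h) ≤ ‖x - h‖ :=
    (le_abs_self _).trans (by simpa using f.le_of_opNorm_le hf (x - h))
  rw [map_sub, hfx] at hsub
  linarith

namespace IsDualitySelection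

lemma abs_apply_le (hjp : IsDualitySelection p jp) (x z : X) :
    |jp x z| ≤ ‖x‖ ^ (p - 1) * ‖z‖ := by
  simpa [(hjp x).2] using (jp x).le_opNorm z

lemma norm_add_le (hjp : IsDualitySelection p jp) {x h : X} (hx : x ≠ 0) (hh : h ≠ 0) :
    ‖x + h‖ ≤ ‖x‖ + jp x h / ‖x‖ ^ (p - 1) + 2 * ‖x‖ * rhoSpace X (‖h‖ / ‖x‖) := by
  have hc : 0 < ‖x‖ ^ (p - 1) := Real.rpow_pos_of_pos (norm_pos_iff.2 hx) _
  have := norm_add_le_of_opNorm_le_one (f := (‖x‖ ^ (p - 1))⁻¹ • jp x) ?_ ?_ hx hh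
  · simpa [div_eq_inv_mul] using this
  · rw [norm_smul, (hjp x).2, norm_inv, Real.norm_of_nonneg hc.le, inv_mul_cancel₀ hc.ne']
  · simp [(hjp x).1, (hjp x).2, hc.ne']

lemma breg_le_add_rpow (hjp : IsDualitySelection p jp) (hp : 1 ≤ p) (x y : X) :
    breg (fun z : X => (1 / p) * ‖z‖ ^ p) (jp x) y x ≤ (1 + 1 / p) * (‖x‖ + ‖x - y‖) ^ p := by
  set c := ‖x‖ + ‖x - y‖
  have hc : 0 ≤ c := by positivity
  have hy : ‖y‖ ≤ c := by simpa using norm_sub_le x (x - y)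
  have hj : -jp x (y - x) ≤ c ^ p :=
    calc -jp x (y - x) ≤ |jp x (y - x)| := neg_le_abs _
      _ ≤ ‖x‖ ^ (p - 1) * ‖y - x‖ := hjp.abs_apply_le x _
      _ ≤ c ^ (p - 1) * c := by
        rw [norm_sub_rev]
        gcongr
        · exact le_add_of_nonneg_right (norm_nonneg _)
        · exact le_add_of_nonneg_left (norm_nonneg _)
      _ = c ^ p := by rw [← Real.rpow_add_one' hc (by linarith), sub_add_cancel]
  have hyp : (1 / p) * ‖y‖ ^ p ≤ (1 / p) * c ^ p := by gcongr
  have hxp : 0 ≤ (1 / p) * ‖x‖ ^ p := by positivity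
  simp only [breg]
  linarith

end IsDualitySelection

lemma exists_breg_le_of_norm_sub_le_mul {K : ℝ} (hq1 : 1 ≤ q) (hq2 : q ≤ 2) (hK : 0 < K)
    (hρ : ∀ τ : ℝ, 0 < τ → rhoSpace X τ ≤ K * τ ^ q) (hp : 1 < p)
    (hjp : IsDualitySelection p jp) :
    ∃ ε > 0, ∃ C > 0, ∀ x y : X, ‖x - y‖ ≤ ε * ‖x‖ →
      breg (fun z : X => (1 / p) * ‖z‖ ^ p) (jp x) y x ≤ C * ‖x‖ ^ (p - q) * ‖x - y‖ ^ q := by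
  obtain ⟨M, hM, htaylor⟩ := exists_one_add_rpow_le_quadratic hp
  have hp0 : 0 < p := by linarith
  set C := 2 * p * K + M * (1 + 2 * K) ^ 2
  refine ⟨1 / (2 + 4 * K), by positivity, C / p, by positivity, fun x y hxy => ?_⟩
  rcases eq_or_ne y x with rfl | hyx
  · simp only [breg, sub_self, map_zero]
    positivity
  rw [norm_sub_rev] at hxy ⊢
  set h := y - x
  have hh : h ≠ 0 := sub_ne_zero.2 hyx
  have ha : 0 < ‖x‖ := pos_of_mul_pos_right ((norm_pos_iff.2 hh).trans_le hxy) (by positivity)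
  have hsmooth := hjp.norm_add_le (norm_pos_iff.1 ha) hh
  rw [Real.rpow_sub_one ha.ne', show x + h = y by simp [h]] at hsmooth
  set a := ‖x‖
  set B := ‖h‖ / a with hB
  have hρB := mul_le_mul_of_nonneg_left (hρ B (by positivity)) (by positivity : 0 ≤ 2 * a)
  have hs := rpow_le_one_add_of_le_one_add (s := ‖y‖ / a) (J := jp x h / a ^ p) (B := B)
    hp0.le hq1 hq2 hK.le hM htaylor (by positivity) (by positivity) ?hBε ?hJ ?hsJ
  case hBε =>
    have : B ≤ 1 / (2 + 4 * K) := by rw [hB, div_le_iff₀ ha]; exact hxy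
    calc (2 + 4 * K) * B ≤ (2 + 4 * K) * (1 / (2 + 4 * K)) := by gcongr
      _ = 1 := by field_simp
  case hJ =>
    calc |jp x h / a ^ p| = |jp x h| / a ^ p := by rw [abs_div, abs_of_pos (Real.rpow_pos_of_pos ha p)]
      _ ≤ a ^ (p - 1) * ‖h‖ / a ^ p := by gcongr; exact hjp.abs_apply_le x h
      _ = B := by rw [hB, Real.rpow_sub_one ha.ne']; field_simp
  case hsJ =>
    have hJa : jp x h / (a ^ p / a) = jp x h / a ^ p * a := by field_simp
    rw [div_le_iff₀ ha]
    nlinarith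
  have hscale : a ^ p * B ^ q = a ^ (p - q) * ‖h‖ ^ q := by
    rw [Real.div_rpow (norm_nonneg _) ha.le, Real.rpow_sub ha]
    ring
  rw [Real.div_rpow (norm_nonneg _) ha.le, div_le_iff₀ (by positivity)] at hs
  calc breg (fun z : X => (1 / p) * ‖z‖ ^ p) (jp x) y x
      = (‖y‖ ^ p - a ^ p - p * jp x h) / p := by simp only [breg]; field_simp; ring
    _ ≤ (C * (a ^ (p - q) * ‖h‖ ^ q)) / p := by
      gcongr
      have : (1 + p * (jp x h / a ^ p) + C * B ^ q) * a ^ p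
          = a ^ p + p * jp x h + C * (a ^ p * B ^ q) := by field_simp
      rw [← hscale]
      linarith
    _ = C / p * a ^ (p - q) * ‖h‖ ^ q := by ring

lemma exists_breg_le_rpow_of_mul_le_norm_sub (hp : 1 ≤ p) (hjp : IsDualitySelection p jp)
    {ε : ℝ} (hε : 0 < ε) :
    ∃ C > 0, ∀ x y : X, ε * ‖x‖ ≤ ‖x - y‖ →
      breg (fun z : X => (1 / p) * ‖z‖ ^ p) (jp x) y x ≤ C * ‖x - y‖ ^ p := by
  refine ⟨(1 + 1 / p) * (ε⁻¹ + 1) ^ p, by positivity, fun x y hxy => ?_⟩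
  have hsum : ‖x‖ + ‖x - y‖ ≤ (ε⁻¹ + 1) * ‖x - y‖ := by
    have : ‖x‖ ≤ ε⁻¹ * ‖x - y‖ := by rw [inv_mul_eq_div, le_div_iff₀' hε]; exact hxy
    linarith
  calc breg (fun z : X => (1 / p) * ‖z‖ ^ p) (jp x) y x
      ≤ (1 + 1 / p) * (‖x‖ + ‖x - y‖) ^ p := hjp.breg_le_add_rpow hp x y
    _ ≤ (1 + 1 / p) * ((ε⁻¹ + 1) * ‖x - y‖) ^ p := by gcongr
    _ = (1 + 1 / p) * (ε⁻¹ + 1) ^ p * ‖x - y‖ ^ p := by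
      rw [Real.mul_rpow (by positivity) (norm_nonneg _)]; ring

lemma exists_breg_le_of_mul_le_norm_sub_le_mul (hp : 1 ≤ p) (hq : 0 ≤ q)
    (hjp : IsDualitySelection p jp) {ε τ : ℝ} (hε : 0 < ε) (hτ : 0 ≤ τ) :
    ∃ C > 0, ∀ x y : X, x ≠ 0 → ε * ‖x‖ ≤ ‖x - y‖ → ‖x - y‖ ≤ τ * ‖x‖ →
      breg (fun z : X => (1 / p) * ‖z‖ ^ p) (jp x) y x ≤ C * ‖x‖ ^ (p - q) * ‖x - y‖ ^ q := by
  refine ⟨(1 + 1 / p) * (1 + τ) ^ p * ε⁻¹ ^ q, by positivity, fun x y hx hlo hhi => ?_⟩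
  have ha : 0 < ‖x‖ := norm_pos_iff.2 hx
  have hxq : ‖x‖ ^ q ≤ ε⁻¹ ^ q * ‖x - y‖ ^ q := by
    rw [← Real.mul_rpow (by positivity) (norm_nonneg _)]
    gcongr
    rw [inv_mul_eq_div, le_div_iff₀' hε]
    exact hlo
  calc breg (fun z : X => (1 / p) * ‖z‖ ^ p) (jp x) y x
      ≤ (1 + 1 / p) * (‖x‖ + ‖x - y‖) ^ p := hjp.breg_le_add_rpow hp x y
    _ ≤ (1 + 1 / p) * ((1 + τ) * ‖x‖) ^ p := by gcongr; linarith
    _ = (1 + 1 / p) * (1 + τ) ^ p * ‖x‖ ^ (p - q) * ‖x‖ ^ q := by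
      rw [Real.mul_rpow (by positivity) ha.le, mul_assoc _ (‖x‖ ^ (p - q)), ← Real.rpow_add ha,
        sub_add_cancel]
      ring
    _ ≤ (1 + 1 / p) * (1 + τ) ^ p * ‖x‖ ^ (p - q) * (ε⁻¹ ^ q * ‖x - y‖ ^ q) := by gcongr
    _ = (1 + 1 / p) * (1 + τ) ^ p * ε⁻¹ ^ q * ‖x‖ ^ (p - q) * ‖x - y‖ ^ q := by ring

end NormedSpace

theorem stmt18_general (X : Type*) [NormedAddCommGroup X] [NormedSpace ℝ X]
    (q : ℝ) (hq1 : 1 < q) (hq2 : q ≤ 2)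
    (hsmooth : ∃ K : ℝ, 0 < K ∧ ∀ τ : ℝ, 0 < τ → rhoSpace X τ ≤ K * τ ^ q)
    (p : ℝ) (hp : 1 < p)
    (jp : X → X →L[ℝ] ℝ) (hjp : IsDualitySelection p jp) :
    (p = q → ∃ C : ℝ, 0 < C ∧ ∀ x y : X,
      breg (fun z : X => (1 / p) * ‖z‖ ^ p) (jp x) y x ≤ C * ‖x - y‖ ^ q) ∧
    (p ≠ q → ∀ τbar : ℝ, 0 < τbar → ∃ C : ℝ, 0 < C ∧
      ∀ x y : X, x ≠ 0 → ‖x - y‖ ≤ τbar * ‖x‖ →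
        breg (fun z : X => (1 / p) * ‖z‖ ^ p) (jp x) y x ≤
          C * ‖x‖ ^ (p - q) * ‖x - y‖ ^ q) := by
  obtain ⟨K, hK, hρ⟩ := hsmooth
  obtain ⟨ε, hε, C₁, hC₁, hnear⟩ := exists_breg_le_of_norm_sub_le_mul hq1.le hq2 hK hρ hp hjp
  refine ⟨fun hpq => ?_, fun _ τ hτ => ?_⟩
  · subst hpq
    obtain ⟨C₂, hC₂, hfar⟩ := exists_breg_le_rpow_of_mul_le_norm_sub hp.le hjp hε
    refine ⟨C₁ + C₂, by positivity, fun x y => ?_⟩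
    rcases le_total ‖x - y‖ (ε * ‖x‖) with hxy | hxy
    · have := hnear x y hxy
      rw [sub_self, Real.rpow_zero, mul_one] at this
      exact this.trans (by gcongr; linarith)
    · exact (hfar x y hxy).trans (by gcongr; linarith)
  · obtain ⟨C₂, hC₂, hfar⟩ :=
      exists_breg_le_of_mul_le_norm_sub_le_mul hp.le (zero_le_one.trans hq1.le) hjp hε hτ.le
    refine ⟨C₁ + C₂, by positivity, fun x y hx hxy => ?_⟩
    rcases le_total ‖x - y‖ (ε * ‖x‖) with hnr | hnr
    · exact (hnear x y hnr).trans (by gcongr; linarith)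
    · exact (hfar x y hx hnr hxy).trans (by gcongr; linarith)

/-- if `X` is `q`-smooth for some `q ∈ (1,2]` and `F = (1/p)‖·‖^p`, then:
if `p = q` there is `C > 0` with `Δ_F^{j_p(x)}(y,x) ≤ C‖x−y‖^q` for all `x, y`; and if
`p ≠ q` then for every `τ̄ > 0` there is `C > 0` with
`Δ_F^{j_p(x)}(y,x) ≤ C‖x‖^{p−q}‖x−y‖^q` whenever `x ≠ 0` and `‖x−y‖ ≤ τ̄‖x‖`. -/
theorem stmt18 (X : Type*) [NormedAddCommGroup X] [NormedSpace ℝ X] [CompleteSpace X]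
    (hdim : 2 ≤ Module.rank ℝ X)
    (q : ℝ) (hq1 : 1 < q) (hq2 : q ≤ 2)
    (hsmooth : ∃ K : ℝ, 0 < K ∧ ∀ τ : ℝ, 0 < τ → rhoSpace X τ ≤ K * τ ^ q)
    (p : ℝ) (hp : 1 < p)
    (jp : X → X →L[ℝ] ℝ) (hjp : IsDualitySelection p jp) :
    (p = q → ∃ C : ℝ, 0 < C ∧ ∀ x y : X,
      breg (fun z : X => (1 / p) * ‖z‖ ^ p) (jp x) y x ≤ C * ‖x - y‖ ^ q) ∧
    (p ≠ q → ∀ τbar : ℝ, 0 < τbar → ∃ C : ℝ, 0 < C ∧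
      ∀ x y : X, x ≠ 0 → ‖x - y‖ ≤ τbar * ‖x‖ →
        breg (fun z : X => (1 / p) * ‖z‖ ^ p) (jp x) y x ≤
          C * ‖x‖ ^ (p - q) * ‖x - y‖ ^ q) :=
  stmt18_general X q hq1 hq2 hsmooth p hp jp hjp
end

section
/- Let X be a real Banach space with dim X ≥ 2 that is r-convex for some r ∈ [2,∞), i.e. there exists K > 0 with δ_X(ε) ≥ Kε^r for all ε ∈ [0,2]. Let p > 1, F(x) = (1/p)‖x‖^p, and j_p : X → X* a selection of the duality mapping. If p = r, there exists C > 0 such that Δ_F^{j_p(x)}(y,x) ≥ C‖x−y‖^r for all x, y ∈ X. If p ≠ r, then for every τ̄ > 0 there exists C_τ̄ > 0 such that Δ_F^{j_p(x)}(y,x) ≥ C_τ̄ ‖x‖^{p−r}‖x−y‖^r for all x ≠ 0 and y ∈ X with ‖x−y‖ ≤ τ̄‖x‖. -/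
open scoped ENNReal

/-! Write `a = ‖x‖` and `b = ‖y‖`. As `‖j_p(x)‖ = a^(p-1)` and `j_p(x) x = a^p`, the Bregman
distance splits as `Δ = g(a, b) + (a^(p-1) b - j_p(x) y)`, where
`g(a, b) = b^p / p + (p - 1) a^p / p - a^(p-1) b ≥ 0` is the defect in Young's inequality; the
second term is nonnegative too.

If the norms differ by at least `‖x - y‖ / 2`, the first term suffices: `g(a, ·)` grows
quadratically away from `a`, and `‖x - y‖^r ≤ (τ̄ a)^(r-2) ‖x - y‖^2`.
Otherwise the directions `u = x / a` and `v = y / b` satisfy `a ‖u - v‖ ≥ ‖x - y‖ / 2`, and testing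
`j_p(x)` on `u + v` bounds the second term below by `2 a^(p-1) b δ_X(‖u - v‖)`, to which
`r`-convexity applies. When `p = r` the remaining region `‖x - y‖ ≥ 4 ‖x‖` is handled by
`g(a, b) ≥ (1/p - 3^(1-p)) b^p`. -/

open Real

lemma rpow_sub_one_mul_self {p u : ℝ} (hp : p ≠ 0) (hu : 0 ≤ u) : u ^ (p - 1) * u = u ^ p := by
  rw [← rpow_add_one' hu (by simpa using hp), sub_add_cancel]

lemma rpow_le_rpow_sub_two_mul_sq {r ε M : ℝ} (hr : 2 ≤ r) (hε : 0 ≤ ε) (hεM : ε ≤ M) :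
    ε ^ r ≤ M ^ (r - 2) * ε ^ 2 := by
  have hsplit : ε ^ r = ε ^ (r - 2) * ε ^ 2 := by
    rw [← rpow_natCast, ← rpow_add' hε (by norm_num; linarith)]
    norm_num
  rw [hsplit]
  gcongr

lemma three_rpow_one_sub_lt_one_div {p : ℝ} (hp : 2 ≤ p) : (3 : ℝ) ^ (1 - p) < 1 / p := by
  have hbern : 1 + (p - 1) * 2 ≤ (1 + 2 : ℝ) ^ (p - 1) :=
    one_add_mul_self_le_rpow_one_add (by norm_num) (by linarith)
  rw [show (1 : ℝ) - p = -(p - 1) by ring, rpow_neg (by norm_num), one_div]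
  exact inv_strictAnti₀ (by linarith) (by norm_num at hbern ⊢; linarith)

lemma min_div_mul_sq_le_rpow_sub_one_mul {p m M : ℝ} (hp : 1 < p) (hm : 0 < m) (hmM : m ≤ M)
    (hM : 1 ≤ M) : min 1 (p - 1) / M * (m - 1) ^ 2 ≤ (m ^ (p - 1) - 1) * (m - 1) := by
  have hmin : 0 ≤ min 1 (p - 1) := le_min zero_le_one (by linarith)
  rcases le_total m 1 with hm1 | hm1
  · have key : min 1 (p - 1) * (1 - m) ≤ 1 - m ^ (p - 1) := by
      rcases le_total 2 p with hp2 | hp2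
      · have hpow : m ^ (p - 1) ≤ m ^ (1 : ℝ) := rpow_le_rpow_of_exponent_ge hm hm1 (by linarith)
        rw [rpow_one] at hpow
        nlinarith [min_le_left 1 (p - 1)]
      · have hbern := rpow_one_add_le_one_add_mul_self (s := m - 1) (by linarith) (p := p - 1)
          (by linarith) (by linarith)
        rw [add_sub_cancel] at hbern
        nlinarith [min_le_right 1 (p - 1)]
    have hdiv : min 1 (p - 1) / M ≤ min 1 (p - 1) := div_le_self hmin hM
    nlinarith [mul_le_mul_of_nonneg_right key (by linarith : 0 ≤ 1 - m)]
  · have hbern : 1 + p * (m - 1) ≤ m ^ (p - 1) * m := by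
      rw [rpow_sub_one_mul_self (by linarith) hm.le]
      simpa using one_add_mul_self_le_rpow_one_add (s := m - 1) (by linarith) hp.le
    have hq : 0 ≤ m ^ (p - 1) - 1 := sub_nonneg.2 (one_le_rpow hm1 (by linarith))
    have key : min 1 (p - 1) / M * (m - 1) ≤ m ^ (p - 1) - 1 := by
      rw [div_mul_eq_mul_div, div_le_iff₀ (by linarith)]
      nlinarith [mul_le_mul_of_nonneg_left hmM hq,
        mul_le_mul_of_nonneg_right (min_le_right 1 (p - 1)) (by linarith : 0 ≤ m - 1)]
    nlinarith [mul_le_mul_of_nonneg_right key (by linarith : 0 ≤ m - 1)]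

noncomputable def youngGap (p a b : ℝ) : ℝ := b ^ p / p + (p - 1) / p * a ^ p - a ^ (p - 1) * b

lemma youngGap_nonneg {p a b : ℝ} (hp : 1 < p) (ha : 0 ≤ a) (hb : 0 ≤ b) :
    0 ≤ youngGap p a b := by
  have hpq : p.HolderConjugate (p / (p - 1)) := Real.HolderConjugate.conjExponent hp
  have hyoung := young_inequality_of_nonneg hb (rpow_nonneg ha (p - 1)) hpq
  have hpow : (a ^ (p - 1)) ^ (p / (p - 1)) = a ^ p := by
    rw [← rpow_mul ha, mul_div_cancel₀ _ (by linarith)]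
  rw [hpow, div_div_eq_mul_div] at hyoung
  unfold youngGap
  linarith [show a ^ p * (p - 1) / p = (p - 1) / p * a ^ p by ring]

lemma youngGap_eq_rpow_mul {p a b : ℝ} (hp : p ≠ 0) (ha : 0 < a) (hb : 0 ≤ b) :
    youngGap p a b = a ^ p * youngGap p 1 (b / a) := by
  simp only [youngGap, one_rpow, div_rpow hb ha.le, rpow_sub_one ha.ne']
  field_simp

lemma youngGap_one_eq {p t u : ℝ} (hp : p ≠ 0) (hu : 0 ≤ u) :
    youngGap p 1 t = youngGap p 1 u + (u ^ (p - 1) - 1) * (t - u) + youngGap p u t := by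
  simp only [youngGap, one_rpow]
  rw [← rpow_sub_one_mul_self hp hu]
  field_simp
  ring

lemma youngGap_one_ge_sq {p S t : ℝ} (hp : 1 < p) (hS : 0 ≤ S) (ht : 0 ≤ t) (htS : t ≤ 1 + S) :
    min 1 (p - 1) / (2 * (2 + S)) * (t - 1) ^ 2 ≤ youngGap p 1 t := by
  set m := (1 + t) / 2 with hm_def
  have hm : 0 < m := by positivity
  have hsplit := youngGap_one_eq (p := p) (t := t) (by linarith) hm.le
  have hquot := min_div_mul_sq_le_rpow_sub_one_mul hp hm (M := (2 + S) / 2) (by linarith)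
    (by linarith)
  have hgap_m := youngGap_nonneg hp zero_le_one hm.le
  have hgap_mt := youngGap_nonneg hp hm.le ht
  calc min 1 (p - 1) / (2 * (2 + S)) * (t - 1) ^ 2
      = min 1 (p - 1) / ((2 + S) / 2) * (m - 1) ^ 2 := by field_simp; ring
    _ ≤ (m ^ (p - 1) - 1) * (t - m) := by rwa [show t - m = m - 1 by ring]
    _ ≤ youngGap p 1 t := by linarith

lemma youngGap_ge_sq {p S a b : ℝ} (hp : 1 < p) (hS : 0 ≤ S) (ha : 0 < a) (hb : 0 ≤ b)
    (hbS : b ≤ (1 + S) * a) :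
    min 1 (p - 1) / (2 * (2 + S)) * (a ^ (p - 2) * (b - a) ^ 2) ≤ youngGap p a b := by
  rw [youngGap_eq_rpow_mul (by linarith) ha hb]
  have h := youngGap_one_ge_sq hp hS (div_nonneg hb ha.le) ((div_le_iff₀ ha).2 hbS)
  have hscale : a ^ (p - 2) * (b - a) ^ 2 = a ^ p * (b / a - 1) ^ 2 := by
    rw [rpow_sub ha, rpow_two]
    field_simp
  rw [hscale, mul_left_comm]
  exact mul_le_mul_of_nonneg_left h (by positivity)

lemma youngGap_ge_of_three_mul_le {p a b : ℝ} (hp : 1 ≤ p) (ha : 0 ≤ a) (hab : 3 * a ≤ b) :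
    (1 / p - 3 ^ (1 - p)) * b ^ p ≤ youngGap p a b := by
  have hb : 0 ≤ b := by linarith
  have hmono : a ^ (p - 1) ≤ (b / 3) ^ (p - 1) := rpow_le_rpow ha (by linarith) (by linarith)
  have hthird : (b / 3) ^ (p - 1) * b = 3 ^ (1 - p) * b ^ p := by
    rw [div_rpow hb (by norm_num), div_mul_eq_mul_div, rpow_sub_one_mul_self (by linarith) hb,
      show (1 : ℝ) - p = -(p - 1) by ring, rpow_neg (by norm_num), div_eq_inv_mul]
  have hrest : 0 ≤ (p - 1) / p * a ^ p := by
    have : 0 ≤ p - 1 := by linarith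
    positivity
  unfold youngGap
  linarith [mul_le_mul_of_nonneg_right hmono hb, show (1 / p - 3 ^ (1 - p)) * b ^ p =
    b ^ p / p - 3 ^ (1 - p) * b ^ p by ring]

section NormedSpace

variable {X : Type*} [NormedAddCommGroup X] [NormedSpace ℝ X]

lemma norm_add_le_two_sub_deltaSpace {u v : X} (hu : ‖u‖ = 1) (hv : ‖v‖ = 1) :
    ‖u + v‖ ≤ 2 - 2 * deltaSpace X ‖u - v‖ := by
  have hbdd : BddBelow {s : ℝ | ∃ y z : X, ‖y‖ = 1 ∧ ‖z‖ = 1 ∧ ‖y - z‖ = ‖u - v‖ ∧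
      s = 1 - ‖y + z‖ / 2} := by
    refine ⟨0, ?_⟩
    rintro _ ⟨y, z, hy, hz, -, rfl⟩
    linarith [norm_add_le y z]
  have : deltaSpace X ‖u - v‖ ≤ 1 - ‖u + v‖ / 2 := csInf_le hbdd ⟨u, v, hu, hv, rfl, rfl⟩
  linarith

lemma norm_sub_le_mul_norm_sub_add_abs {x y : X} (hx : x ≠ 0) (hy : y ≠ 0) :
    ‖x - y‖ ≤ ‖x‖ * ‖‖x‖⁻¹ • x - ‖y‖⁻¹ • y‖ + |‖x‖ - ‖y‖| := by
  have hv : ‖‖y‖⁻¹ • y‖ = 1 := norm_smul_inv_norm hy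
  have hsplit : x - y = ‖x‖ • (‖x‖⁻¹ • x - ‖y‖⁻¹ • y) + (‖x‖ - ‖y‖) • (‖y‖⁻¹ • y) := by
    rw [smul_sub, sub_smul, smul_smul, smul_smul, smul_smul,
      mul_inv_cancel₀ (norm_ne_zero_iff.2 hx), mul_inv_cancel₀ (norm_ne_zero_iff.2 hy),
      one_smul, one_smul]
    abel
  calc ‖x - y‖ ≤ ‖‖x‖ • (‖x‖⁻¹ • x - ‖y‖⁻¹ • y)‖ + ‖(‖x‖ - ‖y‖) • (‖y‖⁻¹ • y)‖ := by
        rw [hsplit]; exact norm_add_le _ _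
    _ = ‖x‖ * ‖‖x‖⁻¹ • x - ‖y‖⁻¹ • y‖ + |‖x‖ - ‖y‖| := by
        rw [norm_smul, norm_smul, hv, norm_norm, Real.norm_eq_abs, mul_one]

namespace IsDualitySelection

variable {p : ℝ} {jp : X → X →L[ℝ] ℝ}

lemma apply_self (hjp : IsDualitySelection p jp) (hp : p ≠ 0) (x : X) : jp x x = ‖x‖ ^ p := by
  rw [(hjp x).1, (hjp x).2, rpow_sub_one_mul_self hp (norm_nonneg x)]

lemma apply_le (hjp : IsDualitySelection p jp) (x y : X) : jp x y ≤ ‖x‖ ^ (p - 1) * ‖y‖ :=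
  calc jp x y ≤ ‖jp x y‖ := Real.le_norm_self _
    _ ≤ ‖jp x‖ * ‖y‖ := (jp x).le_opNorm y
    _ = ‖x‖ ^ (p - 1) * ‖y‖ := by rw [(hjp x).2]

lemma breg_eq (hjp : IsDualitySelection p jp) (hp : p ≠ 0) (x y : X) :
    breg (fun z : X => (1 / p) * ‖z‖ ^ p) (jp x) y x =
      youngGap p ‖x‖ ‖y‖ + (‖x‖ ^ (p - 1) * ‖y‖ - jp x y) := by
  simp only [breg, youngGap, map_sub, hjp.apply_self hp]
  field_simp
  ring

lemma youngGap_le_breg (hjp : IsDualitySelection p jp) (hp : p ≠ 0) (x y : X) :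
    youngGap p ‖x‖ ‖y‖ ≤ breg (fun z : X => (1 / p) * ‖z‖ ^ p) (jp x) y x := by
  rw [hjp.breg_eq hp]
  linarith [hjp.apply_le x y]

lemma youngGap_add_deltaSpace_le_breg (hjp : IsDualitySelection p jp) (hp : p ≠ 0) {x y : X}
    (hx : x ≠ 0) (hy : y ≠ 0) :
    youngGap p ‖x‖ ‖y‖ + 2 * (‖x‖ ^ (p - 1) * ‖y‖ * deltaSpace X ‖‖x‖⁻¹ • x - ‖y‖⁻¹ • y‖) ≤
      breg (fun z : X => (1 / p) * ‖z‖ ^ p) (jp x) y x := by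
  set u := ‖x‖⁻¹ • x
  set v := ‖y‖⁻¹ • y
  set δ := deltaSpace X ‖u - v‖
  have hxu : jp x u = ‖x‖ ^ (p - 1) := by
    rw [map_smul, hjp.apply_self hp, smul_eq_mul, ← rpow_sub_one_mul_self hp (norm_nonneg x)]
    field_simp [norm_ne_zero_iff.2 hx]
  have hyv : jp x y = ‖y‖ * jp x v := by
    rw [map_smul, smul_eq_mul, ← mul_assoc, mul_inv_cancel₀ (norm_ne_zero_iff.2 hy), one_mul]
  have huv : jp x (u + v) ≤ ‖x‖ ^ (p - 1) * (2 - 2 * δ) :=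
    (hjp.apply_le x _).trans (mul_le_mul_of_nonneg_left
      (norm_add_le_two_sub_deltaSpace (norm_smul_inv_norm hx) (norm_smul_inv_norm hy))
      (by positivity))
  rw [map_add, hxu] at huv
  have hv : ‖y‖ * jp x v ≤ ‖y‖ * (‖x‖ ^ (p - 1) * (1 - 2 * δ)) :=
    mul_le_mul_of_nonneg_left (by linarith) (norm_nonneg y)
  rw [hjp.breg_eq hp, hyv]
  linarith

lemma breg_ge_of_le_abs_norm_sub_norm (hjp : IsDualitySelection p jp) (hp : 1 < p) {r S : ℝ}
    (hr : 2 ≤ r) (hS : 0 < S) {x y : X} (hx : x ≠ 0) (hxy : ‖x - y‖ ≤ S * ‖x‖)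
    (hnorms : ‖x - y‖ / 2 ≤ |‖x‖ - ‖y‖|) :
    min 1 (p - 1) / (2 * (2 + S)) / (4 * S ^ (r - 2)) * ‖x‖ ^ (p - r) * ‖x - y‖ ^ r ≤
      breg (fun z : X => (1 / p) * ‖z‖ ^ p) (jp x) y x := by
  set a := ‖x‖
  set b := ‖y‖
  set ε := ‖x - y‖
  set c := min 1 (p - 1) / (2 * (2 + S))
  have ha : 0 < a := norm_pos_iff.2 hx
  have hc : 0 ≤ c := div_nonneg (le_min zero_le_one (by linarith)) (by linarith)
  have hgap : c * (a ^ (p - 2) * (b - a) ^ 2) ≤ youngGap p a b :=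
    youngGap_ge_sq hp hS.le ha (norm_nonneg y) (by linarith [norm_le_norm_add_norm_sub x y])
  have hsq : ε ^ 2 / 4 ≤ (b - a) ^ 2 := by
    have := pow_le_pow_left₀ (by positivity) hnorms 2
    rw [sq_abs] at this
    nlinarith
  have hpow : a ^ (p - r) * ε ^ r ≤ S ^ (r - 2) * (a ^ (p - 2) * ε ^ 2) := by
    have h := rpow_le_rpow_sub_two_mul_sq hr (norm_nonneg _) hxy
    rw [mul_rpow hS.le ha.le] at h
    calc a ^ (p - r) * ε ^ r ≤ a ^ (p - r) * (S ^ (r - 2) * a ^ (r - 2) * ε ^ 2) := by gcongr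
      _ = S ^ (r - 2) * (a ^ (p - 2) * ε ^ 2) := by
        rw [show p - 2 = (p - r) + (r - 2) by ring, rpow_add ha]
        ring
  calc c / (4 * S ^ (r - 2)) * a ^ (p - r) * ε ^ r
      = c / (4 * S ^ (r - 2)) * (a ^ (p - r) * ε ^ r) := by ring
    _ ≤ c / (4 * S ^ (r - 2)) * (S ^ (r - 2) * (a ^ (p - 2) * ε ^ 2)) := by gcongr
    _ = c * (a ^ (p - 2) * (ε ^ 2 / 4)) := by field_simp
    _ ≤ c * (a ^ (p - 2) * (b - a) ^ 2) := by gcongr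
    _ ≤ youngGap p a b := hgap
    _ ≤ _ := hjp.youngGap_le_breg (by linarith) x y

lemma breg_ge_of_abs_norm_sub_norm_le (hjp : IsDualitySelection p jp) (hp : 1 < p) {r K : ℝ}
    (hr : 0 ≤ r) (hK : 0 ≤ K) (hδ : ∀ ε : ℝ, 0 ≤ ε → ε ≤ 2 → K * ε ^ r ≤ deltaSpace X ε)
    {x y : X} (hx : x ≠ 0) (hnorms : |‖x‖ - ‖y‖| ≤ ‖x - y‖ / 2) :
    2 * K / (3 * 2 ^ r) * ‖x‖ ^ (p - r) * ‖x - y‖ ^ r ≤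
      breg (fun z : X => (1 / p) * ‖z‖ ^ p) (jp x) y x := by
  set a := ‖x‖
  set b := ‖y‖
  set ε := ‖x - y‖
  have ha : 0 < a := norm_pos_iff.2 hx
  have hb : a / 3 ≤ b := by
    linarith [abs_le.1 hnorms, norm_sub_le x y]
  have hy : y ≠ 0 := norm_pos_iff.1 (by linarith)
  set η := ‖‖x‖⁻¹ • x - ‖y‖⁻¹ • y‖
  have hη : ε / (2 * a) ≤ η := by
    rw [div_le_iff₀ (by positivity)]
    linarith [norm_sub_le_mul_norm_sub_add_abs hx hy]
  have hη2 : η ≤ 2 := by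
    have hu : ‖‖x‖⁻¹ • x‖ = 1 := norm_smul_inv_norm hx
    have hv : ‖‖y‖⁻¹ • y‖ = 1 := norm_smul_inv_norm hy
    linarith [norm_sub_le (‖x‖⁻¹ • x) (‖y‖⁻¹ • y)]
  have hbreg := hjp.youngGap_add_deltaSpace_le_breg (by linarith) hx hy
  have hgap := youngGap_nonneg hp ha.le (norm_nonneg y)
  calc 2 * K / (3 * 2 ^ r) * a ^ (p - r) * ε ^ r
      = 2 * K * (a ^ (p - 1) * (a / 3) * (ε / (2 * a)) ^ r) := by
        rw [div_rpow (norm_nonneg _) (by positivity), mul_rpow (by norm_num) ha.le, rpow_sub ha,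
          ← rpow_sub_one_mul_self (p := p) (by linarith) ha.le]
        field_simp
        rfl
    _ ≤ 2 * K * (a ^ (p - 1) * b * η ^ r) := by gcongr
    _ ≤ 2 * (a ^ (p - 1) * b * deltaSpace X η) := by
        have hconv := hδ η (norm_nonneg _) hη2
        have hab : 0 ≤ a ^ (p - 1) * b := by positivity
        nlinarith
    _ ≤ _ := by linarith

lemma breg_ge_of_four_mul_norm_le (hjp : IsDualitySelection p jp) (hp : 2 ≤ p) {x y : X}
    (hxy : 4 * ‖x‖ ≤ ‖x - y‖) :
    (1 / p - 3 ^ (1 - p)) * (3 / 4) ^ p * ‖x - y‖ ^ p ≤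
      breg (fun z : X => (1 / p) * ‖z‖ ^ p) (jp x) y x := by
  have hy : 3 / 4 * ‖x - y‖ ≤ ‖y‖ := by linarith [norm_sub_le x y]
  calc (1 / p - 3 ^ (1 - p)) * (3 / 4) ^ p * ‖x - y‖ ^ p
      = (1 / p - 3 ^ (1 - p)) * (3 / 4 * ‖x - y‖) ^ p := by
        rw [mul_rpow (by norm_num) (norm_nonneg _)]
        ring
    _ ≤ (1 / p - 3 ^ (1 - p)) * ‖y‖ ^ p := by
        have hc := three_rpow_one_sub_lt_one_div hp
        gcongr
    _ ≤ youngGap p ‖x‖ ‖y‖ :=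
        youngGap_ge_of_three_mul_le (by linarith) (norm_nonneg x) (by linarith [norm_nonneg x])
    _ ≤ _ := hjp.youngGap_le_breg (by linarith) x y

lemma exists_pos_mul_le_breg (hjp : IsDualitySelection p jp) (hp : 1 < p) {r K S : ℝ}
    (hr : 2 ≤ r) (hK : 0 < K) (hδ : ∀ ε : ℝ, 0 ≤ ε → ε ≤ 2 → K * ε ^ r ≤ deltaSpace X ε)
    (hS : 0 < S) :
    ∃ C : ℝ, 0 < C ∧ ∀ x y : X, x ≠ 0 → ‖x - y‖ ≤ S * ‖x‖ →
      C * ‖x‖ ^ (p - r) * ‖x - y‖ ^ r ≤ breg (fun z : X => (1 / p) * ‖z‖ ^ p) (jp x) y x := by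
  set CA := min 1 (p - 1) / (2 * (2 + S)) / (4 * S ^ (r - 2))
  set CB := 2 * K / (3 * 2 ^ r)
  have hCA : 0 < CA := by
    have : 0 < min 1 (p - 1) := lt_min one_pos (by linarith)
    positivity
  refine ⟨min CA CB, lt_min hCA (by positivity), fun x y hx hxy => ?_⟩
  rcases le_total (‖x - y‖ / 2) |‖x‖ - ‖y‖| with hnorms | hnorms
  · calc min CA CB * ‖x‖ ^ (p - r) * ‖x - y‖ ^ r ≤ CA * ‖x‖ ^ (p - r) * ‖x - y‖ ^ r := by
          gcongr
          exact min_le_left _ _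
      _ ≤ _ := hjp.breg_ge_of_le_abs_norm_sub_norm hp hr hS hx hxy hnorms
  · calc min CA CB * ‖x‖ ^ (p - r) * ‖x - y‖ ^ r ≤ CB * ‖x‖ ^ (p - r) * ‖x - y‖ ^ r := by
          gcongr
          exact min_le_right _ _
      _ ≤ _ := hjp.breg_ge_of_abs_norm_sub_norm_le hp (by linarith) hK.le hδ hx hnorms

end IsDualitySelection

end NormedSpace

theorem stmt19_general (X : Type*) [NormedAddCommGroup X] [NormedSpace ℝ X]
    (r : ℝ) (hr : 2 ≤ r)
    (hconvex : ∃ K : ℝ, 0 < K ∧ ∀ ε : ℝ, 0 ≤ ε → ε ≤ 2 → K * ε ^ r ≤ deltaSpace X ε)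
    (p : ℝ) (hp : 1 < p)
    (jp : X → X →L[ℝ] ℝ) (hjp : IsDualitySelection p jp) :
    (p = r → ∃ C : ℝ, 0 < C ∧ ∀ x y : X,
      C * ‖x - y‖ ^ r ≤ breg (fun z : X => (1 / p) * ‖z‖ ^ p) (jp x) y x) ∧
    (p ≠ r → ∀ τbar : ℝ, 0 < τbar → ∃ C : ℝ, 0 < C ∧
      ∀ x y : X, x ≠ 0 → ‖x - y‖ ≤ τbar * ‖x‖ →
        C * ‖x‖ ^ (p - r) * ‖x - y‖ ^ r ≤
          breg (fun z : X => (1 / p) * ‖z‖ ^ p) (jp x) y x) := by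
  obtain ⟨K, hK, hδ⟩ := hconvex
  refine ⟨fun hpr => ?_, fun _ τbar hτ => hjp.exists_pos_mul_le_breg hp hr hK hδ hτ⟩
  subst hpr
  obtain ⟨C, hC, hnear⟩ := hjp.exists_pos_mul_le_breg hp hr hK hδ (S := 4) (by norm_num)
  set Cfar := (1 / p - 3 ^ (1 - p)) * (3 / 4) ^ p
  have hCfar : 0 < Cfar := mul_pos (sub_pos.2 (three_rpow_one_sub_lt_one_div hr)) (by positivity)
  refine ⟨min C Cfar, lt_min hC hCfar, fun x y => ?_⟩
  rcases le_or_gt (4 * ‖x‖) ‖x - y‖ with hfar | hclose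
  · calc min C Cfar * ‖x - y‖ ^ p ≤ Cfar * ‖x - y‖ ^ p := by gcongr; exact min_le_right _ _
      _ ≤ _ := hjp.breg_ge_of_four_mul_norm_le hr hfar
  · have hx : x ≠ 0 := norm_pos_iff.1 (by linarith [norm_nonneg (x - y)])
    calc min C Cfar * ‖x - y‖ ^ p ≤ C * ‖x‖ ^ (p - p) * ‖x - y‖ ^ p := by
          rw [sub_self, rpow_zero, mul_one]
          gcongr
          exact min_le_left _ _
      _ ≤ _ := hnear x y hx hclose.le

/-- if `X` is `r`-convex for some `r ∈ [2,∞)` and `F = (1/p)‖·‖^p`, then: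
if `p = r` there is `C > 0` with `Δ_F^{j_p(x)}(y,x) ≥ C‖x−y‖^r` for all `x, y`; and if
`p ≠ r` then for every `τ̄ > 0` there is `C > 0` with
`Δ_F^{j_p(x)}(y,x) ≥ C‖x‖^{p−r}‖x−y‖^r` whenever `x ≠ 0` and `‖x−y‖ ≤ τ̄‖x‖`. -/
theorem stmt19 (X : Type*) [NormedAddCommGroup X] [NormedSpace ℝ X] [CompleteSpace X]
    (hdim : 2 ≤ Module.rank ℝ X)
    (r : ℝ) (hr : 2 ≤ r)
    (hconvex : ∃ K : ℝ, 0 < K ∧ ∀ ε : ℝ, 0 ≤ ε → ε ≤ 2 → K * ε ^ r ≤ deltaSpace X ε)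
    (p : ℝ) (hp : 1 < p)
    (jp : X → X →L[ℝ] ℝ) (hjp : IsDualitySelection p jp) :
    (p = r → ∃ C : ℝ, 0 < C ∧ ∀ x y : X,
      C * ‖x - y‖ ^ r ≤ breg (fun z : X => (1 / p) * ‖z‖ ^ p) (jp x) y x) ∧
    (p ≠ r → ∀ τbar : ℝ, 0 < τbar → ∃ C : ℝ, 0 < C ∧
      ∀ x y : X, x ≠ 0 → ‖x - y‖ ≤ τbar * ‖x‖ →
        C * ‖x‖ ^ (p - r) * ‖x - y‖ ^ r ≤
          breg (fun z : X => (1 / p) * ‖z‖ ^ p) (jp x) y x) :=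
  stmt19_general X r hr hconvex p hp jp hjp
end
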